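/- arXiv:1801.04963 — 8 statements merged into one kernel-verified Lean document; each statement's English description precedes it below -/
import Mathlib

section
/- The first Maclaurin coefficients of (1+x)^{1/x}/e are e₀ = 1, e₁ = -1/2, e₂ = 11/24, e₃ = -7/16, e₄ = 2447/5760, e₅ = -959/2304, e₆ = 238043/580608. -/
/-- `(1+x)^{1/x}` extended by `e` at `0`. -/
noncomputable def eFun (x : ℝ) : ℝ :=
  if x = 0 then Real.exp 1 else Real.exp (Real.log (1 + x) / x)

/-!
For `x ≠ 0` we have `(1+x)^{1/x}/e = exp (q(x) + O(x⁷))`, where `q(x) = log(1+x)/x - 1` truncated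
after `x⁶`; replacing `exp` by its Taylor polynomial of degree 6 turns this into an explicit
polynomial which agrees with `∑ₖ eₖ xᵏ` (with the claimed values `eₖ`) up to `O(x⁷)`. A power
series of the function agrees with its own degree-6 truncation up to `O(x⁷)` as well, and the
coefficients of an asymptotic expansion `f(x) = ∑_{k<n} aₖ xᵏ + O(xⁿ)` at `0` are unique.
-/

open Filter Asymptotics Topology Finset FormalMultilinearSeries

section AsymptoticExpansion

variable {𝕜 : Type*} [NontriviallyNormedField 𝕜] {f : 𝕜 → 𝕜} {c : ℕ → 𝕜} {n : ℕ}

theorem HasFPowerSeriesAt.isBigO_sub_sum_range (hf : HasFPowerSeriesAt f (ofScalars 𝕜 c) 0)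
    (n : ℕ) : (fun x => f x - ∑ k ∈ range n, c k * x ^ k) =O[𝓝 0] (· ^ n) := by
  have hnorm : (fun x : 𝕜 => ‖x‖ ^ n) =O[𝓝 0] (· ^ n) :=
    (isBigO_refl (· ^ n) _).norm_left.congr_left fun x => norm_pow x n
  refine ((hf.isBigO_sub_partialSum_pow n).trans hnorm).congr_left fun x => ?_
  simp [partialSum, mul_comm]

theorem tendsto_of_isBigO_sub_sum_range
    (h : (fun x => f x - ∑ k ∈ range (n + 1), c k * x ^ k) =O[𝓝[≠] 0] (· ^ (n + 1))) :
    Tendsto f (𝓝[≠] 0) (𝓝 (c 0)) := by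
  have hpow : Tendsto (· ^ (n + 1)) (𝓝[≠] (0 : 𝕜)) (𝓝 0) :=
    ((continuous_pow (n + 1)).tendsto' 0 0 (by simp)).mono_left nhdsWithin_le_nhds
  have hpoly : Tendsto (fun x => ∑ k ∈ range (n + 1), c k * x ^ k) (𝓝[≠] 0) (𝓝 (c 0)) := by
    have hcont : Continuous fun x : 𝕜 => ∑ k ∈ range (n + 1), c k * x ^ k := by fun_prop
    simpa [sum_range_succ'] using (hcont.tendsto 0).mono_left nhdsWithin_le_nhds
  simpa using (h.trans_tendsto hpow).add hpoly

theorem isBigO_sub_sum_range_div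
    (h : (fun x => f x - ∑ k ∈ range (n + 1), c k * x ^ k) =O[𝓝[≠] 0] (· ^ (n + 1))) :
    (fun x => (f x - c 0) / x - ∑ k ∈ range n, c (k + 1) * x ^ k) =O[𝓝[≠] 0] (· ^ n) := by
  have hx : ∀ᶠ x in 𝓝[≠] (0 : 𝕜), x ≠ 0 := self_mem_nhdsWithin
  refine ((isBigO_mul_iff_isBigO_div hx).1 (h.congr' ?_ .rfl)).congr' .rfl ?_
  all_goals filter_upwards [hx] with x hx
  · have hsum :
        ∑ k ∈ range n, c (k + 1) * x ^ (k + 1) = x * ∑ k ∈ range n, c (k + 1) * x ^ k := by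
      rw [mul_sum]
      exact sum_congr rfl fun k _ => by ring
    rw [sum_range_succ', hsum, mul_sub, mul_div_cancel₀ _ hx]
    ring
  · field_simp
    ring

theorem eq_of_isBigO_sub_sum_range {a b : ℕ → 𝕜}
    (ha : (fun x => f x - ∑ k ∈ range n, a k * x ^ k) =O[𝓝[≠] 0] (· ^ n))
    (hb : (fun x => f x - ∑ k ∈ range n, b k * x ^ k) =O[𝓝[≠] 0] (· ^ n)) :
    ∀ k < n, a k = b k := by
  induction n generalizing f a b with
  | zero => simp
  | succ n ih =>
    have h₀ : a 0 = b 0 :=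
      tendsto_nhds_unique (tendsto_of_isBigO_sub_sum_range ha) (tendsto_of_isBigO_sub_sum_range hb)
    have hsucc := ih (isBigO_sub_sum_range_div ha) (h₀ ▸ isBigO_sub_sum_range_div hb)
    rintro (_ | k) hk
    · exact h₀
    · exact hsucc k (by omega)

end AsymptoticExpansion

theorem hasFPowerSeriesOnBall_ofScalars_of_hasSum {𝕜 : Type*} [RCLike 𝕜] {f : 𝕜 → 𝕜}
    {c : ℕ → 𝕜} {r : NNReal} (hr : 0 < r)
    (hf : ∀ x : 𝕜, ‖x‖ < r → HasSum (fun k => c k * x ^ k) (f x)) :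
    HasFPowerSeriesOnBall f (ofScalars 𝕜 c) 0 r where
  r_le := by
    refine ENNReal.le_of_forall_nnreal_lt fun ρ hρ =>
      (ofScalars 𝕜 c).le_radius_of_tendsto (l := 0) ?_
    have hsum := (hf (ρ : ℝ) (by simpa using hρ)).summable
    simpa [ofScalars_norm] using hsum.tendsto_atTop_zero.norm
  r_pos := by simpa using hr
  hasSum {y} hy := by
    simpa [ofScalars_apply_eq, mul_comm] using hf y (by simpa using hy)

theorem Real.exp_sub_sum_range_isBigO (n : ℕ) :
    (fun u => Real.exp u - ∑ k ∈ range n, (k.factorial : ℝ)⁻¹ * u ^ k) =O[𝓝 0] (· ^ n) := by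
  have h := NormedSpace.hasFPowerSeriesAt_exp_zero_of_radius_pos
    (NormedSpace.expSeries_radius_pos ℝ ℝ)
  rw [NormedSpace.expSeries_eq_ofScalars, ← Real.exp_eq_exp_ℝ] at h
  exact h.isBigO_sub_sum_range n

theorem Real.exp_sub_exp_isBigO {α : Type*} {l : Filter α} {a b : α → ℝ} {β : ℝ}
    (hb : Tendsto b l (𝓝 β)) (hab : Tendsto (fun t => a t - b t) l (𝓝 0)) :
    (fun t => Real.exp (a t) - Real.exp (b t)) =O[l] (fun t => a t - b t) := by
  have hexp : (fun u => Real.exp u - 1) =O[𝓝 0] (fun u => u) := by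
    simpa using Real.exp_sub_sum_range_isBigO 1
  refine (((Real.continuous_exp.tendsto β).comp hb).isBigO_one ℝ |>.mul
    (hexp.comp_tendsto hab)).congr (fun t => ?_) fun t => ?_
  · simp [mul_sub, ← Real.exp_add]
  · simp

noncomputable def eCoefValue : ℕ → ℝ
  | 0 => 1
  | 1 => -(1 / 2)
  | 2 => 11 / 24
  | 3 => -(7 / 16)
  | 4 => 2447 / 5760
  | 5 => -(959 / 2304)
  | 6 => 238043 / 580608
  | _ => 0

/-- Exact quotient of the polynomial in `sum_range_exp_comp_log_sub_eCoefValue` by `x ^ 7`,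
found by computer algebra. -/
noncomputable def expLogTaylorQuotient (x : ℝ) : ℝ :=
  (- 406759 / 1451520) + (9922187 / 43545600) * x - (24049 / 129600) * x ^ 2
    + (78038581 / 522547200) * x ^ 3 - (2190371 / 18662400) * x ^ 4
    + (3645843661 / 41150592000) * x ^ 5 - (1140565123 / 18289152000) * x ^ 6
    + (3366397631 / 73156608000) * x ^ 7 - (526446401 / 15676416000) * x ^ 8
    + (2933540257 / 121927680000) * x ^ 9 - (3077846789 / 182891520000) * x ^ 10
    + (352069988041 / 30725775360000) * x ^ 11 - (1953356833 / 256048128000) * x ^ 12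
    + (108658702109 / 21337344000000) * x ^ 13 - (136867390531 / 41150592000000) * x ^ 14
    + (135339464909 / 64012032000000) * x ^ 15 - (20860342997 / 16003008000000) * x ^ 16
    + (1308322258283 / 1680315840000000) * x ^ 17 - (4217800703 / 9335088000000) * x ^ 18
    + (28662352763 / 112021056000000) * x ^ 19 - (29214131 / 210039480000) * x ^ 20
    + (80736643 / 1120210560000) * x ^ 21 - (565753 / 16003008000) * x ^ 22
    + (230620771 / 14114653056000) * x ^ 23 - (557873 / 78414739200) * x ^ 24
    + (76147 / 26138246400) * x ^ 25 - (22 / 20420505) * x ^ 26 + (247 / 726062400) * x ^ 27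
    - (1 / 12101040) * x ^ 28 + (1 / 84707280) * x ^ 29

theorem sum_range_exp_comp_log_sub_eCoefValue (x : ℝ) :
    ∑ k ∈ range 7, (k.factorial : ℝ)⁻¹ *
        (∑ j ∈ range 7, -(-1 : ℝ) ^ (j + 1) / ((j + 1 : ℕ) : ℝ) * x ^ j - 1) ^ k -
      ∑ k ∈ range 7, eCoefValue k * x ^ k = x ^ 7 * expLogTaylorQuotient x := by
  simp only [sum_range_succ, sum_range_zero, Nat.factorial, eCoefValue, expLogTaylorQuotient]
  push_cast
  ring

theorem eFun_div_exp_sub_sum_range_isBigO :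
    (fun x => eFun x / Real.exp 1 - ∑ k ∈ range 7, eCoefValue k * x ^ k) =O[𝓝[≠] 0] (· ^ 7) := by
  set q : ℝ → ℝ := fun x => ∑ j ∈ range 7, -(-1 : ℝ) ^ (j + 1) / ((j + 1 : ℕ) : ℝ) * x ^ j - 1
  have hpow : Tendsto (· ^ 7) (𝓝[≠] (0 : ℝ)) (𝓝 0) :=
    ((continuous_pow 7).tendsto' 0 0 (by simp)).mono_left nhdsWithin_le_nhds
  have hq_diff : Differentiable ℝ q := by fun_prop
  have hq₀ : q 0 = 0 := by simp [q, sum_range_succ']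
  have hq : Tendsto q (𝓝[≠] 0) (𝓝 0) :=
    (hq_diff.continuous.tendsto' 0 0 hq₀).mono_left nhdsWithin_le_nhds
  have hq_isBigO : q =O[𝓝[≠] 0] (fun x => x) := by
    simpa [hq₀] using ((hq_diff 0).isBigO_sub).mono nhdsWithin_le_nhds
  have hlog : (fun x => (Real.log (1 + x) / x - 1) - q x) =O[𝓝[≠] 0] (· ^ 7) := by
    -- the constant coefficient `-(-1) ^ 0 / 0` of Mathlib's series of `log (1 + x)` is `0`
    have h := isBigO_sub_sum_range_div
      ((hasFPowerSeriesAt_log_one_add.isBigO_sub_sum_range 8).mono nhdsWithin_le_nhds)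
    simpa [q] using h
  have hexp_log : (fun x => Real.exp (Real.log (1 + x) / x - 1) - Real.exp (q x))
      =O[𝓝[≠] 0] (· ^ 7) :=
    (Real.exp_sub_exp_isBigO hq (hlog.trans_tendsto hpow)).trans hlog
  have hexp_taylor : (fun x => Real.exp (q x) - ∑ k ∈ range 7, (k.factorial : ℝ)⁻¹ * q x ^ k)
      =O[𝓝[≠] 0] (· ^ 7) :=
    ((Real.exp_sub_sum_range_isBigO 7).comp_tendsto hq).trans (hq_isBigO.pow 7)
  have hpoly : (fun x => ∑ k ∈ range 7, (k.factorial : ℝ)⁻¹ * q x ^ k -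
      ∑ k ∈ range 7, eCoefValue k * x ^ k) =O[𝓝[≠] 0] (· ^ 7) := by
    have hS : Continuous expLogTaylorQuotient := by unfold expLogTaylorQuotient; fun_prop
    simp only [q, sum_range_exp_comp_log_sub_eCoefValue]
    simpa using (isBigO_refl (· ^ 7) _).mul
      (((hS.tendsto 0).mono_left nhdsWithin_le_nhds).isBigO_one ℝ)
  refine ((hexp_log.add hexp_taylor).add hpoly).congr' ?_ .rfl
  filter_upwards [self_mem_nhdsWithin] with x (hx : x ≠ 0)
  simp [eFun, hx, ← Real.exp_sub]

theorem eCoef_initial_values (e : ℕ → ℝ)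
    (he : ∀ x ∈ Set.Ioo (-1 : ℝ) 1, HasSum (fun k : ℕ => e k * x ^ k) (eFun x / Real.exp 1)) :
    e 0 = 1 ∧ e 1 = -(1 / 2) ∧ e 2 = 11 / 24 ∧ e 3 = -(7 / 16) ∧
    e 4 = 2447 / 5760 ∧ e 5 = -(959 / 2304) ∧ e 6 = 238043 / 580608 := by
  have hseries : HasFPowerSeriesOnBall (fun x => eFun x / Real.exp 1) (ofScalars ℝ e) 0 1 :=
    hasFPowerSeriesOnBall_ofScalars_of_hasSum one_pos fun x hx =>
      he x (by simpa [abs_lt] using hx)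
  have h := eq_of_isBigO_sub_sum_range
    ((hseries.hasFPowerSeriesAt.isBigO_sub_sum_range 7).mono nhdsWithin_le_nhds)
    eFun_div_exp_sub_sum_range_isBigO
  exact ⟨h 0 (by norm_num), h 1 (by norm_num), h 2 (by norm_num), h 3 (by norm_num),
    h 4 (by norm_num), h 5 (by norm_num), h 6 (by norm_num)⟩
end

section
/- For every n ≥ 0, f_n > 0, where f_n = (-1)^n e_n and e_n is the n-th Maclaurin coefficient of (1+x)^{1/x}/e; that is, the Maclaurin coefficients of (1+x)^{1/x}/e alternate in sign. -/
namespace ECoefAux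

open FormalMultilinearSeries

/-- Coefficients of `-log(1-x)/x - 1` as a power series. -/
noncomputable def b : ℕ → ℝ := fun k => if k = 0 then 0 else ((k : ℝ) + 1)⁻¹

lemma b_nonneg (k : ℕ) : 0 ≤ b k := by
  unfold b; split
  · exact le_rfl
  · positivity

lemma b_pos {k : ℕ} (hk : k ≠ 0) : 0 < b k := by
  unfold b; rw [if_neg hk]; positivity

lemma b_abs_le (k : ℕ) : |b k| ≤ 1 := by
  rw [abs_of_nonneg (b_nonneg k)]
  unfold b; split
  · norm_num
  · rw [inv_le_one₀ (by positivity)]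
    have : (0:ℝ) ≤ (k:ℝ) := Nat.cast_nonneg k
    linarith

lemma summable_b {x : ℝ} (hx : |x| < 1) : Summable fun k => b k * x ^ k := by
  refine Summable.of_norm_bounded (summable_geometric_of_lt_one (abs_nonneg x) hx) ?_
  intro k
  rw [Real.norm_eq_abs, abs_mul, abs_pow]
  calc |b k| * |x| ^ k ≤ 1 * |x| ^ k :=
        mul_le_mul_of_nonneg_right (b_abs_le k) (by positivity)
    _ = |x| ^ k := one_mul _

/-- The sum function of the `b` series. -/
noncomputable def s (x : ℝ) : ℝ := ∑' k, b k * x ^ k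

lemma hasSum_s {x : ℝ} (hx : |x| < 1) : HasSum (fun k => b k * x ^ k) (s x) :=
  (summable_b hx).hasSum

lemma s_zero : s 0 = 0 := by
  have h : (fun k : ℕ => b k * (0:ℝ) ^ k) = fun _ => 0 := by
    funext k
    cases k with
    | zero => simp [b]
    | succ m => simp
  rw [s, h, tsum_zero]

lemma exp_s {x : ℝ} (hx : x ∈ Set.Ioo (-1 : ℝ) 1) :
    Real.exp (s x) = eFun (-x) / Real.exp 1 := by
  rcases eq_or_ne x 0 with rfl | hx0
  · simp [s_zero, eFun, Real.exp_zero, div_self (Real.exp_ne_zero 1)]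
  · have habs : |x| < 1 := abs_lt.mpr ⟨hx.1, hx.2⟩
    have h1 := Real.hasSum_pow_div_log_of_abs_lt_one habs
    have h2 := h1.div_const x
    have h3 : HasSum (fun n : ℕ => x ^ n / ((n : ℝ) + 1)) (-Real.log (1 - x) / x) := by
      refine HasSum.congr_fun h2 fun n => ?_
      have hn : ((n : ℝ) + 1) ≠ 0 := by positivity
      field_simp [pow_succ]
      ring
    have h4 : HasSum (fun n : ℕ => if n = 0 then (1:ℝ) else 0) 1 := hasSum_ite_eq 0 1
    have h5 := h3.sub h4
    have h6 : HasSum (fun k => b k * x ^ k) (-Real.log (1 - x) / x - 1) := by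
      refine HasSum.congr_fun h5 fun n => ?_
      cases n with
      | zero => simp [b]
      | succ m =>
        simp only [b, Nat.succ_ne_zero, if_false, sub_zero]
        push_cast
        ring
    have hs : s x = -Real.log (1 - x) / x - 1 := (hasSum_s habs).unique h6
    have hnx : -x ≠ 0 := neg_ne_zero.mpr hx0
    rw [hs, eFun, if_neg hnx]
    have h1x : (1 : ℝ) + -x = 1 - x := by ring
    rw [h1x, div_neg_eq_neg_div, ← neg_div, Real.exp_sub]

/-- The formal series of `s`. -/
noncomputable def p : FormalMultilinearSeries ℝ ℝ ℝ := ofScalars ℝ b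

lemma hp : HasFPowerSeriesOnBall s p 0 1 := by
  refine ⟨?_, by norm_num, ?_⟩
  · have := p.le_radius_of_bound 1 (r := 1) (fun n => by
      rw [p, ofScalars_norm, Real.norm_eq_abs]
      calc |b n| * ((1:NNReal):ℝ) ^ n = |b n| := by norm_num
        _ ≤ 1 := b_abs_le n)
    simpa using this
  · intro y hy
    rw [mem_emetric_ball_zero_iff] at hy
    have hy0 : ‖y‖₊ < 1 := ENNReal.coe_lt_one_iff.mp hy
    have hy' : |y| < 1 := by
      rw [← Real.norm_eq_abs]
      exact_mod_cast hy0
    have hterm : (fun n => p n fun _ => y) = fun k => b k * y ^ k := by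
      funext n
      rw [p, ofScalars_apply_eq, smul_eq_mul]
    rw [zero_add, hterm]
    exact hasSum_s hy'

end ECoefAux

open ECoefAux FormalMultilinearSeries in
theorem eCoef_alternating_sign (e : ℕ → ℝ)
    (he : ∀ x ∈ Set.Ioo (-1 : ℝ) 1, HasSum (fun k : ℕ => e k * x ^ k) (eFun x / Real.exp 1))
    (n : ℕ) :
    0 < (-1 : ℝ) ^ n * e n := by
  classical
  set c : ℕ → ℝ := fun k => (-1 : ℝ) ^ k * e k with hc
  set G : ℝ → ℝ := fun x => Real.exp (s x) with hG
  -- boundedness of coefficients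
  have h34 : ((3:ℝ)/4) ∈ Set.Ioo (-1 : ℝ) 1 := by norm_num
  have hsum34 := (he _ h34).summable
  have htend : Filter.Tendsto (fun k => ‖e k * (3/4 : ℝ) ^ k‖) Filter.atTop (nhds 0) := by
    simpa using (hsum34.tendsto_atTop_zero.norm)
  obtain ⟨M, hM⟩ := htend.bddAbove_range
  have hMle : ∀ k, ‖e k * (3/4 : ℝ) ^ k‖ ≤ M := fun k => hM ⟨k, rfl⟩
  -- first power series for G
  have hG1 : HasFPowerSeriesOnBall G (ofScalars ℝ c) 0 (1/2) := by
    refine ⟨?_, by norm_num, ?_⟩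
    · have hM' : ∀ k, |e k| * (3/4:ℝ)^k ≤ M := fun k => by
        simpa [Real.norm_eq_abs] using hMle k
      have hM0 : (0:ℝ) ≤ M := le_trans (by positivity) (hM' 0)
      have := (ofScalars ℝ c).le_radius_of_bound M (r := 1/2) (fun k => by
        rw [ofScalars_norm, Real.norm_eq_abs]
        have h1 : |c k| = |e k| := by
          rw [hc, abs_mul, abs_pow, abs_neg, abs_one, one_pow, one_mul]
        have h2 : ((1/2 : NNReal) : ℝ) ^ k = (3/4 : ℝ) ^ k * (2/3 : ℝ) ^ k := by
          rw [← mul_pow]; norm_num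
        rw [h1, h2, ← mul_assoc]
        calc |e k| * (3/4:ℝ)^k * (2/3:ℝ)^k ≤ M * 1 :=
              mul_le_mul (hM' k) (pow_le_one₀ (by norm_num) (by norm_num)) (by positivity) hM0
          _ = M := mul_one M)
      simpa using this
    · intro y hy
      rw [mem_emetric_ball_zero_iff] at hy
      have h12 : ((1/2 : NNReal) : ENNReal) = 1/2 := by
        rw [ENNReal.coe_div (by norm_num)]; norm_num
      have hy0 : ‖y‖₊ < 1/2 := ENNReal.coe_lt_coe.mp (h12 ▸ hy)
      have hy' : ‖y‖ < 1/2 := by exact_mod_cast hy0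
      have hy1 : |y| < 1 := by rw [← Real.norm_eq_abs]; linarith
      have hmem : -y ∈ Set.Ioo (-1 : ℝ) 1 := by
        rw [Set.mem_Ioo]
        constructor <;> [nlinarith [abs_lt.mp hy1]; nlinarith [abs_lt.mp hy1]]
      have h := he _ hmem
      have hval : eFun (-y) / Real.exp 1 = G y := by
        rw [hG]
        exact (exp_s (by rw [Set.mem_Ioo]; exact ⟨by nlinarith [abs_lt.mp hy1],
          by nlinarith [abs_lt.mp hy1]⟩)).symm
      rw [hval] at h
      have hterm : (fun k => ofScalars ℝ c k fun _ => y) = fun k => e k * (-y) ^ k := by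
        funext k
        rw [ofScalars_apply_eq, smul_eq_mul, hc, neg_pow, mul_assoc]
        ring
      rw [zero_add, hterm]
      exact h
  -- second power series for G via composition
  have hq : HasFPowerSeriesAt (NormedSpace.exp) (NormedSpace.expSeries ℝ ℝ) (s 0) := by
    rw [s_zero]
    exact NormedSpace.exp_hasFPowerSeriesAt_zero
  have hcomp : HasFPowerSeriesAt (NormedSpace.exp ∘ s)
      ((NormedSpace.expSeries ℝ ℝ).comp p) 0 := hq.comp hp.hasFPowerSeriesAt
  have hGeq : G = NormedSpace.exp ∘ s := by
    funext x
    rw [hG, Function.comp_apply, ← Real.exp_eq_exp_ℝ]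
  have hG2 : HasFPowerSeriesAt G ((NormedSpace.expSeries ℝ ℝ).comp p) 0 := by
    rw [hGeq]; exact hcomp
  -- uniqueness
  have huniq : ofScalars ℝ c = (NormedSpace.expSeries ℝ ℝ).comp p :=
    hG1.hasFPowerSeriesAt.eq_formalMultilinearSeries hG2
  have hkey : c n = ((NormedSpace.expSeries ℝ ℝ).comp p) n (fun _ => (1:ℝ)) := by
    rw [← huniq, ofScalars_apply_eq, smul_eq_mul, one_pow, mul_one]
  rw [show (-1 : ℝ) ^ n * e n = c n from rfl, hkey]
  -- positivity of each composition term
  rw [FormalMultilinearSeries.comp]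
  rw [ContinuousMultilinearMap.sum_apply]
  refine Finset.sum_pos (fun comp _ => ?_) Finset.univ_nonempty
  rw [compAlongComposition_apply]
  have happ : p.applyComposition comp (fun _ => (1:ℝ)) = fun i => b (comp.blocksFun i) := by
    funext i
    show p (comp.blocksFun i) ((fun _ => (1:ℝ)) ∘ comp.embedding i) = _
    have : ((fun _ => (1:ℝ)) ∘ comp.embedding i) = fun _ => (1:ℝ) := rfl
    rw [this, p, ofScalars_apply_eq, smul_eq_mul, one_pow, mul_one]
  rw [happ]
  show (0:ℝ) < NormedSpace.expSeries ℝ ℝ comp.length (fun i => b (comp.blocksFun i))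
  rw [NormedSpace.expSeries]
  rw [ContinuousMultilinearMap.smul_apply, ContinuousMultilinearMap.mkPiAlgebraFin_apply,
    smul_eq_mul, List.prod_ofFn]
  refine mul_pos (by positivity) (Finset.prod_pos fun i _ => ?_)
  exact b_pos (Nat.pos_iff_ne_zero.mp (comp.blocks_pos (comp.blocksFun_mem_blocks i)))
end

section
/- The sequence f_n = (-1)^n e_n, where e_n are the Maclaurin coefficients of (1+x)^{1/x}/e, is convergent (being strictly decreasing and bounded below by 0). -/
open Filter Finset Set
open scoped Topology

namespace FSeqAux

noncomputable def uu (m : ℕ) : ℝ := 1 - 1 / (m + 2)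

lemma uu_nonneg (m : ℕ) : 0 ≤ uu m := by
  have hm : (0:ℝ) ≤ m := Nat.cast_nonneg m
  have : 1 / ((m:ℝ) + 2) ≤ 1 := by
    rw [div_le_one (by linarith)]; linarith
  unfold uu; linarith

lemma uu_le_one (m : ℕ) : uu m ≤ 1 := by
  have hm : (0:ℝ) ≤ m := Nat.cast_nonneg m
  have h2 : (0:ℝ) < (m:ℝ) + 2 := by linarith
  have : 0 ≤ 1 / ((m:ℝ) + 2) := by positivity
  unfold uu; linarith

lemma uu_abs (m : ℕ) : |uu m| ≤ 1 :=
  abs_le.2 ⟨by linarith [uu_nonneg m], uu_le_one m⟩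

noncomputable def ff : ℕ → ℝ
  | 0 => 1
  | n + 1 => (∑ k ∈ (Finset.range (n + 1)).attach, ff k.1 * uu (n - k.1)) / (n + 1 : ℝ)
  decreasing_by exact Finset.mem_range.mp k.2

lemma ff_zero : ff 0 = 1 := by rw [ff]

lemma ff_succ (n : ℕ) :
    ff (n + 1) = (∑ k ∈ Finset.range (n + 1), ff k * uu (n - k)) / (n + 1 : ℝ) := by
  rw [ff]
  congr 1
  exact Finset.sum_attach (Finset.range (n + 1)) (fun k => ff k * uu (n - k))

lemma ff_succ_mul (n : ℕ) :
    ((n : ℝ) + 1) * ff (n + 1) = ∑ k ∈ Finset.range (n + 1), ff k * uu (n - k) := by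
  rw [ff_succ]
  field_simp

lemma ff_nonneg : ∀ n, 0 ≤ ff n := by
  intro n
  induction n using Nat.strong_induction_on with
  | _ n ih =>
    match n with
    | 0 => rw [ff_zero]; norm_num
    | m + 1 =>
      rw [ff_succ]
      apply div_nonneg _ (by positivity)
      exact Finset.sum_nonneg fun k hk =>
        mul_nonneg (ih k (Finset.mem_range.mp hk)) (uu_nonneg _)

lemma ff_le_one : ∀ n, ff n ≤ 1 := by
  intro n
  induction n using Nat.strong_induction_on with
  | _ n ih =>
    match n with
    | 0 => rw [ff_zero]
    | m + 1 =>
      rw [ff_succ, div_le_one (by positivity)]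
      calc ∑ k ∈ Finset.range (m + 1), ff k * uu (m - k)
          ≤ ∑ _k ∈ Finset.range (m + 1), (1:ℝ) := by
            apply Finset.sum_le_sum
            intro k hk
            exact mul_le_one₀ (ih k (Finset.mem_range.mp hk)) (uu_nonneg _) (uu_le_one _)
        _ = (m : ℝ) + 1 := by simp

lemma ff_abs (n : ℕ) : |ff n| ≤ 1 :=
  abs_le.2 ⟨by linarith [ff_nonneg n], ff_le_one n⟩

noncomputable def PP (n : ℕ) : ℝ := ∑ k ∈ Finset.range (n + 1), ff k
noncomputable def RR (n : ℕ) : ℝ := ∑ k ∈ Finset.range (n + 1), ff k / ((n - k : ℕ) + 2)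
noncomputable def QQ (n : ℕ) : ℝ := PP n / (n + 1)

lemma key (n : ℕ) : ((n : ℝ) + 1) * ff (n + 1) = PP n - RR n := by
  rw [ff_succ_mul, PP, RR, ← Finset.sum_sub_distrib]
  apply Finset.sum_congr rfl
  intro k _
  unfold uu
  ring

lemma PP_nonneg (n : ℕ) : 0 ≤ PP n :=
  Finset.sum_nonneg fun k _ => ff_nonneg k

lemma RR_nonneg (n : ℕ) : 0 ≤ RR n :=
  Finset.sum_nonneg fun k _ => div_nonneg (ff_nonneg k) (by positivity)

lemma QQ_nonneg (n : ℕ) : 0 ≤ QQ n := div_nonneg (PP_nonneg n) (by positivity)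

lemma ff_succ_eq (n : ℕ) : ff (n + 1) = QQ n - RR n / ((n : ℝ) + 1) := by
  have h := key n
  have hn : ((n : ℝ) + 1) ≠ 0 := by positivity
  rw [QQ]
  field_simp
  linarith [h]

lemma QQ_succ (n : ℕ) : QQ (n + 1) = QQ n - RR n / (((n : ℝ) + 1) * ((n : ℝ) + 2)) := by
  have hP : PP (n + 1) = PP n + ff (n + 1) := Finset.sum_range_succ _ _
  have hf := ff_succ_eq n
  have hn1 : ((n : ℝ) + 1) ≠ 0 := by positivity
  have hn2 : ((n : ℝ) + 2) ≠ 0 := by positivity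
  rw [QQ, hP, hf, QQ]
  push_cast
  field_simp
  ring

lemma QQ_antitone : Antitone QQ := by
  apply antitone_nat_of_succ_le
  intro n
  rw [QQ_succ]
  have h1 : 0 ≤ RR n / (((n : ℝ) + 1) * ((n : ℝ) + 2)) :=
    div_nonneg (RR_nonneg n) (by positivity)
  linarith

lemma sum_inv_le : ∀ n : ℕ, ∑ j ∈ Finset.range n, 1 / ((j : ℝ) + 2) ≤ 2 * Real.sqrt (n + 1) := by
  intro n
  induction n with
  | zero => simp
  | succ n ih =>
    rw [Finset.sum_range_succ]
    have hb0 : (0:ℝ) < (n : ℝ) + 2 := by positivity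
    set a := Real.sqrt ((n : ℝ) + 1) with ha_def
    set b := Real.sqrt ((n : ℝ) + 2) with hb_def
    have ha2 : a ^ 2 = (n : ℝ) + 1 := Real.sq_sqrt (by positivity)
    have hb2 : b ^ 2 = (n : ℝ) + 2 := Real.sq_sqrt (by positivity)
    have ha : 0 ≤ a := Real.sqrt_nonneg _
    have hb1 : 1 ≤ b := by
      rw [hb_def, show (1:ℝ) = Real.sqrt 1 by rw [Real.sqrt_one]]
      apply Real.sqrt_le_sqrt
      have : (0:ℝ) ≤ n := Nat.cast_nonneg n
      linarith
    have hab : a ≤ b := Real.sqrt_le_sqrt (by linarith)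
    have hstep : 1 / ((n : ℝ) + 2) ≤ 2 * b - 2 * a := by
      rw [← hb2, div_le_iff₀ (by positivity)]
      nlinarith [mul_nonneg (sub_nonneg.2 hab) (sub_nonneg.2 hb1), sq_nonneg (a - 1),
        sq_nonneg (b - a), mul_nonneg (sub_nonneg.2 hab) ha]
    have hcast : ((n:ℕ) + 1 + 1 : ℝ) = (n : ℝ) + 2 := by push_cast; ring
    push_cast
    rw [show ((n:ℝ) + 1 + 1) = (n:ℝ) + 2 by ring]
    linarith

lemma RR_le (n : ℕ) : RR n ≤ 2 * Real.sqrt ((n : ℝ) + 2) := by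
  have h1 : RR n ≤ ∑ k ∈ Finset.range (n + 1), 1 / (((n - k : ℕ) : ℝ) + 2) := by
    apply Finset.sum_le_sum
    intro k _
    gcongr
    exact ff_le_one k
  have h2 : ∑ k ∈ Finset.range (n + 1), 1 / (((n - k : ℕ) : ℝ) + 2)
      = ∑ j ∈ Finset.range (n + 1), 1 / ((j : ℝ) + 2) := by
    have := Finset.sum_range_reflect (fun j => 1 / ((j : ℝ) + 2)) (n + 1)
    simpa using this
  have h3 := sum_inv_le (n + 1)
  rw [h2] at h1
  have hcast : ((n + 1 : ℕ) : ℝ) + 1 = (n : ℝ) + 2 := by push_cast; ring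
  rw [hcast] at h3
  linarith

lemma tendsto_sqrt_n : Tendsto (fun n : ℕ => Real.sqrt ((n:ℝ) + 2)) atTop atTop := by
  apply tendsto_atTop_atTop.2
  intro b
  refine ⟨⌈b^2⌉₊, fun n hn => ?_⟩
  rcases le_or_gt b 0 with hb | hb
  · exact hb.trans (Real.sqrt_nonneg _)
  · rw [show b = Real.sqrt (b^2) by rw [Real.sqrt_sq hb.le]]
    apply Real.sqrt_le_sqrt
    have h1 : (b^2 : ℝ) ≤ ⌈b^2⌉₊ := Nat.le_ceil _
    have h2 : ((⌈b^2⌉₊ : ℕ) : ℝ) ≤ n := Nat.cast_le.2 hn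
    linarith

lemma tendsto_RRdiv : Tendsto (fun n : ℕ => RR n / ((n:ℝ) + 1)) atTop (𝓝 0) := by
  have hb : ∀ n : ℕ, RR n / ((n:ℝ)+1) ≤ 4 / Real.sqrt ((n:ℝ)+2) := by
    intro n
    have hs : (0:ℝ) < Real.sqrt ((n:ℝ)+2) := Real.sqrt_pos.2 (by positivity)
    have hs2 : (Real.sqrt ((n:ℝ)+2))^2 = (n:ℝ)+2 := Real.sq_sqrt (by positivity)
    have h1 : RR n / ((n:ℝ)+1) ≤ 2 * Real.sqrt ((n:ℝ)+2) / ((n:ℝ)+1) := by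
      gcongr
      exact RR_le n
    have h2 : 2 * Real.sqrt ((n:ℝ)+2) / ((n:ℝ)+1) ≤ 4 / Real.sqrt ((n:ℝ)+2) := by
      rw [div_le_div_iff₀ (by positivity) hs]
      nlinarith [hs.le]
    linarith
  apply squeeze_zero (fun n => div_nonneg (RR_nonneg n) (by positivity)) hb
  exact Tendsto.div_atTop tendsto_const_nhds tendsto_sqrt_n

lemma tendsto_ff : ∃ L, Tendsto ff atTop (𝓝 L) := by
  have hbdd : BddBelow (Set.range QQ) := ⟨0, by rintro x ⟨n, rfl⟩; exact QQ_nonneg n⟩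
  have hQ : Tendsto QQ atTop (𝓝 (⨅ n, QQ n)) := tendsto_atTop_ciInf QQ_antitone hbdd
  refine ⟨⨅ n, QQ n, ?_⟩
  have h2 : Tendsto (fun n => ff (n + 1)) atTop (𝓝 (⨅ n, QQ n)) := by
    have h3 := hQ.sub tendsto_RRdiv
    rw [sub_zero] at h3
    exact h3.congr fun n => (ff_succ_eq n).symm
  exact (tendsto_add_atTop_iff_nat 1).1 h2

/-! ### Generating function -/

lemma summable_aux {c : ℕ → ℝ} (h0 : ∀ n, |c n| ≤ 1) {y : ℝ} (hy : |y| < 1) :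
    Summable fun n => ‖c n * y ^ n‖ := by
  apply Summable.of_nonneg_of_le (fun n => norm_nonneg _) (fun n => ?_)
    (summable_geometric_of_lt_one (abs_nonneg y) hy)
  rw [Real.norm_eq_abs, abs_mul, abs_pow]
  exact mul_le_of_le_one_left (pow_nonneg (abs_nonneg y) n) (h0 n)

noncomputable def WW (y : ℝ) : ℝ := ∑' n, ff n * y ^ n
noncomputable def UU (y : ℝ) : ℝ := ∑' n, uu n * y ^ n
noncomputable def VV (y : ℝ) : ℝ := ∑' n, uu n * (y ^ (n + 1) / (n + 1))

lemma prod_eq {y : ℝ} (hy : |y| < 1) :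
    UU y * WW y = ∑' n : ℕ, (((n : ℝ) + 1) * ff (n + 1)) * y ^ n := by
  rw [UU, WW,
    tsum_mul_tsum_eq_tsum_sum_range_of_summable_norm (summable_aux uu_abs hy)
      (summable_aux ff_abs hy)]
  apply tsum_congr
  intro n
  have hterm : ∀ k ∈ Finset.range (n + 1),
      (uu k * y ^ k) * (ff (n - k) * y ^ (n - k)) = (uu k * ff (n - k)) * y ^ n := by
    intro k hk
    have hkn : k ≤ n := Nat.lt_succ_iff.mp (Finset.mem_range.mp hk)
    rw [show (uu k * y ^ k) * (ff (n - k) * y ^ (n - k))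
        = (uu k * ff (n - k)) * (y ^ k * y ^ (n - k)) by ring,
      ← pow_add, Nat.add_sub_cancel' hkn]
  rw [Finset.sum_congr rfl hterm, ← Finset.sum_mul]
  congr 1
  calc ∑ k ∈ Finset.range (n + 1), uu k * ff (n - k)
      = ∑ j ∈ Finset.range (n + 1), uu (n - j) * ff (n - (n - j)) := by
        have := Finset.sum_range_reflect (fun j => uu j * ff (n - j)) (n + 1)
        simpa using this.symm
    _ = ∑ j ∈ Finset.range (n + 1), ff j * uu (n - j) := by
        apply Finset.sum_congr rfl
        intro j hj
        have hjn : j ≤ n := Nat.lt_succ_iff.mp (Finset.mem_range.mp hj)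
        rw [Nat.sub_sub_self hjn]
        ring
    _ = ((n : ℝ) + 1) * ff (n + 1) := (ff_succ_mul n).symm

lemma r_facts {y : ℝ} (hy : |y| < 1) :
    0 < (1 + |y|) / 2 ∧ (1 + |y|) / 2 < 1 ∧ |y| < (1 + |y|) / 2 := by
  have h0 := abs_nonneg y
  exact ⟨by linarith, by linarith, by linarith⟩

lemma summable_deriv_bound {r : ℝ} (hr0 : 0 < r) (hr1 : r < 1) :
    Summable fun n : ℕ => (n : ℝ) * r ^ (n - 1) := by
  apply (summable_nat_add_iff 1).1
  have h1 : Summable fun n : ℕ => (n : ℝ) * r ^ n := by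
    have := summable_pow_mul_geometric_of_norm_lt_one 1 (r := r)
      (by rw [Real.norm_eq_abs, abs_of_pos hr0]; exact hr1)
    simpa using this
  have h2 : Summable fun n : ℕ => r ^ n :=
    summable_geometric_of_lt_one hr0.le hr1
  apply Summable.congr (h1.add h2)
  intro n
  simp only [Nat.add_sub_cancel]
  push_cast
  ring

lemma hasDerivAt_WW {y : ℝ} (hy : |y| < 1) : HasDerivAt WW (UU y * WW y) y := by
  obtain ⟨hr0, hr1, hyr⟩ := r_facts hy
  set r := (1 + |y|) / 2 with hr_def
  have hyball : y ∈ Metric.ball (0:ℝ) r := by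
    rw [Metric.mem_ball, Real.dist_eq, sub_zero]; exact hyr
  have hbound : ∀ (n : ℕ) (z : ℝ), z ∈ Metric.ball (0:ℝ) r →
      ‖ff n * ((n : ℝ) * z ^ (n - 1))‖ ≤ (n : ℝ) * r ^ (n - 1) := by
    intro n z hz
    have hzr : |z| ≤ r := by
      rw [Metric.mem_ball, Real.dist_eq, sub_zero] at hz
      exact hz.le
    rw [Real.norm_eq_abs, abs_mul, abs_mul, abs_pow, Nat.abs_cast]
    calc |ff n| * ((n : ℝ) * |z| ^ (n - 1)) ≤ 1 * ((n : ℝ) * r ^ (n - 1)) := by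
          apply mul_le_mul (ff_abs n) _ (by positivity) zero_le_one
          exact mul_le_mul_of_nonneg_left
            (pow_le_pow_left₀ (abs_nonneg z) hzr _) (Nat.cast_nonneg n)
      _ = (n : ℝ) * r ^ (n - 1) := one_mul _
  have hderiv : ∀ (n : ℕ) (z : ℝ), z ∈ Metric.ball (0:ℝ) r →
      HasDerivAt (fun w => ff n * w ^ n) (ff n * ((n : ℝ) * z ^ (n - 1))) z :=
    fun n z _ => (hasDerivAt_pow n z).const_mul (ff n)
  have hsum0 : Summable fun n : ℕ => ff n * (0:ℝ) ^ n := by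
    apply summable_of_ne_finset_zero (s := {0})
    intro n hn
    have hne : n ≠ 0 := by simpa using hn
    simp [zero_pow hne]
  have hmain : HasDerivAt (fun z => ∑' n : ℕ, ff n * z ^ n)
      (∑' n : ℕ, ff n * ((n : ℝ) * y ^ (n - 1))) y :=
    hasDerivAt_tsum_of_isPreconnected (summable_deriv_bound hr0 hr1)
      Metric.isOpen_ball (convex_ball (0:ℝ) r).isPreconnected
      hderiv hbound (Metric.mem_ball_self hr0) hsum0 hyball
  have hsum : Summable fun n : ℕ => ff n * ((n : ℝ) * y ^ (n - 1)) :=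
    Summable.of_norm_bounded (summable_deriv_bound hr0 hr1)
      (fun n => hbound n y hyball)
  have heq : (∑' n : ℕ, ff n * ((n : ℝ) * y ^ (n - 1)))
      = ∑' n : ℕ, (((n : ℝ) + 1) * ff (n + 1)) * y ^ n := by
    rw [Summable.tsum_eq_zero_add hsum]
    simp only [Nat.cast_zero, zero_mul, mul_zero, zero_add]
    apply tsum_congr
    intro n
    simp only [Nat.add_sub_cancel]
    push_cast
    ring
  rw [prod_eq hy, ← heq]
  exact hmain

lemma hasDerivAt_VV {y : ℝ} (hy : |y| < 1) : HasDerivAt VV (UU y) y := by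
  obtain ⟨hr0, hr1, hyr⟩ := r_facts hy
  set r := (1 + |y|) / 2 with hr_def
  have hyball : y ∈ Metric.ball (0:ℝ) r := by
    rw [Metric.mem_ball, Real.dist_eq, sub_zero]; exact hyr
  have hderiv : ∀ (n : ℕ) (z : ℝ), z ∈ Metric.ball (0:ℝ) r →
      HasDerivAt (fun w => uu n * (w ^ (n + 1) / ((n : ℝ) + 1))) (uu n * z ^ n) z := by
    intro n z _
    have h := ((hasDerivAt_pow (n + 1) z).div_const ((n : ℝ) + 1)).const_mul (uu n)
    refine h.congr_deriv ?_
    have hne : ((n : ℝ) + 1) ≠ 0 := by positivity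
    simp only [Nat.add_sub_cancel]
    push_cast
    field_simp
  have hbound : ∀ (n : ℕ) (z : ℝ), z ∈ Metric.ball (0:ℝ) r →
      ‖uu n * z ^ n‖ ≤ r ^ n := by
    intro n z hz
    have hzr : |z| ≤ r := by
      rw [Metric.mem_ball, Real.dist_eq, sub_zero] at hz
      exact hz.le
    rw [Real.norm_eq_abs, abs_mul, abs_pow]
    calc |uu n| * |z| ^ n ≤ 1 * r ^ n :=
          mul_le_mul (uu_abs n) (pow_le_pow_left₀ (abs_nonneg z) hzr n)
            (by positivity) zero_le_one
      _ = r ^ n := one_mul _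
  have hsum0 : Summable fun n : ℕ => uu n * ((0:ℝ) ^ (n + 1) / ((n : ℝ) + 1)) := by
    have hzero : (fun n : ℕ => uu n * ((0:ℝ) ^ (n + 1) / ((n : ℝ) + 1))) = fun _ => (0:ℝ) := by
      funext n
      simp [zero_pow (Nat.succ_ne_zero n)]
    rw [hzero]
    exact summable_zero
  exact hasDerivAt_tsum_of_isPreconnected (summable_geometric_of_lt_one hr0.le hr1)
    Metric.isOpen_ball (convex_ball (0:ℝ) r).isPreconnected
    hderiv hbound (Metric.mem_ball_self hr0) hsum0 hyball

lemma WW_zero : WW 0 = 1 := by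
  rw [WW, tsum_eq_single 0 (fun n hn => by simp [zero_pow hn])]
  simp [ff_zero]

lemma VV_zero : VV 0 = 0 := by
  rw [VV]
  have hzero : (fun n : ℕ => uu n * ((0:ℝ) ^ (n + 1) / ((n : ℝ) + 1))) = fun _ => (0:ℝ) := by
    funext n
    simp [zero_pow (Nat.succ_ne_zero n)]
  rw [hzero, tsum_zero]

lemma WW_eq_exp_VV {y : ℝ} (hy : y ∈ Set.Ioo (-1:ℝ) 1) : WW y = Real.exp (VV y) := by
  have hΦ : ∀ z ∈ Set.Ioo (-1:ℝ) 1,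
      HasDerivAt (fun w => WW w * Real.exp (-VV w)) 0 z := by
    intro z hz
    have hz' : |z| < 1 := abs_lt.2 ⟨hz.1, hz.2⟩
    have h1 := hasDerivAt_WW hz'
    have h2 : HasDerivAt (fun w => Real.exp (-VV w))
        (Real.exp (-VV z) * (-UU z)) z := ((hasDerivAt_VV hz').neg).exp
    have h3 := h1.mul h2
    refine h3.congr_deriv ?_
    ring
  have hmem0 : (0:ℝ) ∈ Set.Ioo (-1:ℝ) 1 := by norm_num
  have hconst : WW y * Real.exp (-VV y) = WW 0 * Real.exp (-VV 0) := by
    apply (convex_Ioo (-1:ℝ) 1).is_const_of_fderivWithin_eq_zero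
      (f := fun w => WW w * Real.exp (-VV w))
      (fun z hz => ((hΦ z hz).differentiableAt).differentiableWithinAt)
      (fun z hz => ?_) hy hmem0
    rw [fderivWithin_of_isOpen isOpen_Ioo hz, (hΦ z hz).hasFDerivAt.fderiv]
    ext w
    simp
  rw [WW_zero, VV_zero] at hconst
  simp only [neg_zero, Real.exp_zero, one_mul, mul_one] at hconst
  have hne : Real.exp (-VV y) ≠ 0 := Real.exp_ne_zero _
  calc WW y = WW y * Real.exp (-VV y) * Real.exp (VV y) := by
        rw [mul_assoc, ← Real.exp_add]
        simp
    _ = Real.exp (VV y) := by rw [hconst, one_mul]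

lemma VV_eq {y : ℝ} (hy : |y| < 1) (h0 : y ≠ 0) :
    VV y = -Real.log (1 - y) / y - 1 := by
  have hlog := Real.hasSum_pow_div_log_of_abs_lt_one hy
  have h2 : HasSum (fun n : ℕ => y ^ (n + 2) / ((n : ℝ) + 2))
      (-Real.log (1 - y) - y) := by
    have h3 := (hasSum_nat_add_iff' (f := fun n : ℕ => y ^ (n + 1) / ((n : ℝ) + 1)) 1).2 hlog
    simp only [Finset.range_one, Finset.sum_singleton, Nat.cast_zero, zero_add, pow_one,
      div_one] at h3
    have hfun : (fun n : ℕ => y ^ (n + 1 + 1) / ((↑(n + 1) : ℝ) + 1))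
        = fun n : ℕ => y ^ (n + 2) / ((n : ℝ) + 2) := by
      funext n; push_cast; ring_nf
    rwa [hfun] at h3
  have hVV : VV y = ∑' n : ℕ, y ^ (n + 1) / ((n : ℝ) + 2) := by
    rw [VV]
    apply tsum_congr
    intro n
    have h1 : ((n:ℝ) + 1) ≠ 0 := by positivity
    have hden : ((n:ℝ) + 2) ≠ 0 := by positivity
    rw [uu]
    field_simp
    ring
  have hyVV : y * VV y = -Real.log (1 - y) - y := by
    rw [hVV, ← tsum_mul_left, ← h2.tsum_eq]
    apply tsum_congr
    intro n
    rw [show n + 2 = (n + 1) + 1 from rfl, pow_succ]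
    ring
  have hrhs : -Real.log (1 - y) / y - 1 = (-Real.log (1 - y) - y) / y := by
    field_simp
  rw [hrhs, eq_div_iff h0]
  linear_combination hyVV

lemma hasSum_ff {x : ℝ} (hx : x ∈ Set.Ioo (-1:ℝ) 1) :
    HasSum (fun n : ℕ => ((-1:ℝ) ^ n * ff n) * x ^ n) (eFun x / Real.exp 1) := by
  have hx' : (-x) ∈ Set.Ioo (-1:ℝ) 1 := ⟨by linarith [hx.2], by linarith [hx.1]⟩
  have habs : |(-x)| < 1 := abs_lt.2 ⟨hx'.1, hx'.2⟩
  have hsummable : Summable fun n : ℕ => ff n * (-x) ^ n :=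
    (summable_aux ff_abs habs).of_norm
  have hsum : HasSum (fun n : ℕ => ff n * (-x) ^ n) (WW (-x)) := hsummable.hasSum
  have h1 : WW (-x) = eFun x / Real.exp 1 := by
    rw [WW_eq_exp_VV hx']
    by_cases h0 : x = 0
    · subst h0
      rw [neg_zero, VV_zero, Real.exp_zero, eFun, if_pos rfl, div_self (Real.exp_ne_zero 1)]
    · rw [VV_eq habs (neg_ne_zero.2 h0)]
      rw [eFun, if_neg h0, ← Real.exp_sub]
      congr 1
      have : (1 : ℝ) - -x = 1 + x := by ring
      rw [this]
      field_simp
  rw [h1] at hsum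
  have hfun : (fun n : ℕ => ((-1:ℝ) ^ n * ff n) * x ^ n) = fun n : ℕ => ff n * (-x) ^ n := by
    funext n
    rw [neg_pow]
    ring
  rw [hfun]
  exact hsum

lemma mk_power_series {c : ℕ → ℝ} {h : ℝ → ℝ}
    (hc : ∀ x ∈ Set.Ioo (-1:ℝ) 1, HasSum (fun k : ℕ => c k * x ^ k) (h x)) :
    HasFPowerSeriesOnBall h (FormalMultilinearSeries.ofScalars ℝ c) 0 1 := by
  refine ⟨?_, by norm_num, ?_⟩
  · apply ENNReal.le_of_forall_nnreal_lt
    intro r hr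
    apply FormalMultilinearSeries.le_radius_of_summable_norm
    have hrlt : (r : ℝ) < 1 := by exact_mod_cast hr
    have hmem : (r : ℝ) ∈ Set.Ioo (-1:ℝ) 1 := ⟨lt_of_lt_of_le (by norm_num) r.2, hrlt⟩
    have hsum : Summable fun n => |c n * (r:ℝ) ^ n| :=
      (hc r hmem).summable.abs
    apply Summable.congr hsum
    intro n
    rw [abs_mul, abs_pow, abs_of_nonneg r.coe_nonneg,
      FormalMultilinearSeries.ofScalars_norm, Real.norm_eq_abs]
  · intro z hz
    rw [EMetric.mem_ball, edist_dist, Real.dist_eq, sub_zero, ENNReal.ofReal_lt_one] at hz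
    have hmem : z ∈ Set.Ioo (-1:ℝ) 1 := ⟨(abs_lt.1 hz).1, (abs_lt.1 hz).2⟩
    have hfun : (fun n : ℕ => (FormalMultilinearSeries.ofScalars ℝ c n) fun _ => z)
        = fun n : ℕ => c n * z ^ n := by
      funext n
      rw [FormalMultilinearSeries.ofScalars_apply_eq, smul_eq_mul]
    rw [zero_add, hfun]
    exact hc z hmem

lemma coeff_unique {a b : ℕ → ℝ} {h : ℝ → ℝ}
    (ha : ∀ x ∈ Set.Ioo (-1:ℝ) 1, HasSum (fun k : ℕ => a k * x ^ k) (h x))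
    (hb : ∀ x ∈ Set.Ioo (-1:ℝ) 1, HasSum (fun k : ℕ => b k * x ^ k) (h x)) : a = b := by
  have h1 := (mk_power_series ha).hasFPowerSeriesAt
  have h2 := (mk_power_series hb).hasFPowerSeriesAt
  have h3 := h1.eq_formalMultilinearSeries h2
  exact (FormalMultilinearSeries.ofScalars_series_eq_iff ℝ a b).1 h3

end FSeqAux

theorem fSeq_convergent (e : ℕ → ℝ)
    (he : ∀ x ∈ Set.Ioo (-1 : ℝ) 1, HasSum (fun k : ℕ => e k * x ^ k) (eFun x / Real.exp 1)) :
    ∃ L : ℝ, Filter.Tendsto (fun n : ℕ => (-1 : ℝ) ^ n * e n) Filter.atTop (nhds L) := by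
  have hff : ∀ x ∈ Set.Ioo (-1 : ℝ) 1,
      HasSum (fun k : ℕ => ((-1:ℝ) ^ k * FSeqAux.ff k) * x ^ k) (eFun x / Real.exp 1) :=
    fun x hx => FSeqAux.hasSum_ff hx
  have heq : e = fun k => (-1:ℝ) ^ k * FSeqAux.ff k := FSeqAux.coeff_unique he hff
  obtain ⟨L, hL⟩ := FSeqAux.tendsto_ff
  refine ⟨L, ?_⟩
  have hfun : (fun n : ℕ => (-1:ℝ) ^ n * e n) = FSeqAux.ff := by
    funext n
    rw [heq]
    rw [← mul_assoc, ← mul_pow]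
    norm_num
  rw [hfun]
  exact hL
end

section
/- For x ∈ (0,1), e·(1 - x/2) < (1+x)^{1/x} < e·(1 - x/2 + 11x²/24). -/
open Real Set

lemma aux_log_lower (x : ℝ) (hx : 0 < x) : x - x ^ 2 / 2 < Real.log (1 + x) := by
  set f : ℝ → ℝ := fun t => Real.log (1 + t) - (t - t ^ 2 / 2) with hf
  have hd : ∀ t : ℝ, -1 < t → HasDerivAt f (1 / (1 + t) - (1 - t)) t := by
    intro t ht
    have h1 : HasDerivAt (fun t : ℝ => 1 + t) 1 t := by
      simpa using (hasDerivAt_id t).const_add 1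
    have h2 : HasDerivAt (fun t : ℝ => Real.log (1 + t)) (1 / (1 + t)) t := by
      have := (Real.hasDerivAt_log (by linarith : (1 : ℝ) + t ≠ 0)).comp t h1
      simpa [one_div, Function.comp_def] using this
    have h3 : HasDerivAt (fun t : ℝ => t - t ^ 2 / 2) (1 - t) t := by
      have := (hasDerivAt_id t).sub ((hasDerivAt_pow 2 t).div_const 2)
      simpa [Pi.sub_def] using this
    exact h2.sub h3
  have hmono : StrictMonoOn f (Set.Ici 0) := by
    apply strictMonoOn_of_deriv_pos (convex_Ici 0)
    · exact fun t ht => (hd t (by simp at ht; linarith)).continuousAt.continuousWithinAt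
    · intro t ht
      rw [interior_Ici] at ht
      have ht' : (0 : ℝ) < t := ht
      rw [(hd t (by linarith)).deriv]
      have : 1 / (1 + t) - (1 - t) = t ^ 2 / (1 + t) := by
        field_simp; ring
      rw [this]; positivity
  have := hmono (Set.self_mem_Ici) (Set.mem_Ici.2 hx.le) hx
  simpa [hf] using this

lemma aux_log_upper (x : ℝ) (hx : 0 < x) :
    Real.log (1 + x) < x - x ^ 2 / 2 + x ^ 3 / 3 := by
  set f : ℝ → ℝ := fun t => (t - t ^ 2 / 2 + t ^ 3 / 3) - Real.log (1 + t) with hf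
  have hd : ∀ t : ℝ, -1 < t → HasDerivAt f ((1 - t + t ^ 2) - 1 / (1 + t)) t := by
    intro t ht
    have h1 : HasDerivAt (fun t : ℝ => 1 + t) 1 t := by
      simpa using (hasDerivAt_id t).const_add 1
    have h2 : HasDerivAt (fun t : ℝ => Real.log (1 + t)) (1 / (1 + t)) t := by
      have := (Real.hasDerivAt_log (by linarith : (1 : ℝ) + t ≠ 0)).comp t h1
      simpa [one_div, Function.comp_def] using this
    have h3 : HasDerivAt (fun t : ℝ => t - t ^ 2 / 2 + t ^ 3 / 3) (1 - t + t ^ 2) t := by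
      have := ((hasDerivAt_id t).sub ((hasDerivAt_pow 2 t).div_const 2)).add
        ((hasDerivAt_pow 3 t).div_const 3)
      simpa [Pi.add_def, Pi.sub_def] using this
    exact h3.sub h2
  have hmono : StrictMonoOn f (Set.Ici 0) := by
    apply strictMonoOn_of_deriv_pos (convex_Ici 0)
    · exact fun t ht => (hd t (by simp at ht; linarith)).continuousAt.continuousWithinAt
    · intro t ht
      rw [interior_Ici] at ht
      have ht' : (0 : ℝ) < t := ht
      rw [(hd t (by linarith)).deriv]
      have : (1 - t + t ^ 2) - 1 / (1 + t) = t ^ 3 / (1 + t) := by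
        field_simp; ring
      rw [this]; positivity
  have := hmono (Set.self_mem_Ici) (Set.mem_Ici.2 hx.le) hx
  have h0 : f 0 = 0 := by simp [hf]
  rw [h0] at this
  simp only [hf] at this
  linarith

lemma aux_exp_quad (u : ℝ) (hu : u < 0) : Real.exp u < 1 + u + u ^ 2 / 2 := by
  set g : ℝ → ℝ := fun t => 1 + t + t ^ 2 / 2 - Real.exp t with hg
  have hd : ∀ t : ℝ, HasDerivAt g (1 + t - Real.exp t) t := by
    intro t
    have h1 : HasDerivAt (fun t : ℝ => 1 + t + t ^ 2 / 2) (1 + t) t := by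
      have := ((hasDerivAt_id t).const_add 1).add ((hasDerivAt_pow 2 t).div_const 2)
      simpa [Pi.add_def] using this
    exact h1.sub (Real.hasDerivAt_exp t)
  have hanti : StrictAntiOn g (Set.Iic 0) := by
    apply strictAntiOn_of_deriv_neg (convex_Iic 0)
    · exact fun t _ => (hd t).continuousAt.continuousWithinAt
    · intro t ht
      rw [interior_Iic] at ht
      rw [(hd t).deriv]
      have := Real.add_one_lt_exp (ne_of_lt ht)
      linarith
  have := hanti (Set.mem_Iic.2 hu.le) (Set.self_mem_Iic) hu
  simp only [hg, Real.exp_zero] at this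
  linarith

theorem carleman_type_bounds (x : ℝ) (hx : x ∈ Set.Ioo (0 : ℝ) 1) :
    Real.exp 1 * (1 - x / 2) < Real.exp (Real.log (1 + x) / x) ∧
    Real.exp (Real.log (1 + x) / x) < Real.exp 1 * (1 - x / 2 + 11 * x ^ 2 / 24) := by
  obtain ⟨hx0, hx1⟩ := hx
  have hlog_lo := aux_log_lower x hx0
  have hlog_hi := aux_log_upper x hx0
  constructor
  · -- lower bound
    have h2 : (0 : ℝ) < 1 - x / 2 := by linarith
    have hlog2 : Real.log (1 - x / 2) < -x / 2 := by
      have := Real.log_lt_sub_one_of_pos h2 (by intro h; nlinarith [h2] )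
      linarith
    calc Real.exp 1 * (1 - x / 2) = Real.exp (1 + Real.log (1 - x / 2)) := by
          rw [Real.exp_add, Real.exp_log h2]
      _ < Real.exp (Real.log (1 + x) / x) := by
          apply Real.exp_lt_exp.2
          rw [lt_div_iff₀ hx0]
          nlinarith
  · -- upper bound
    have hu : -x / 2 + x ^ 2 / 3 < 0 := by nlinarith
    have hq := aux_exp_quad (-x / 2 + x ^ 2 / 3) hu
    have h1 : Real.exp (Real.log (1 + x) / x) < Real.exp (1 + (-x / 2 + x ^ 2 / 3)) := by
      apply Real.exp_lt_exp.2
      rw [div_lt_iff₀ hx0]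
      nlinarith
    have h2 : Real.exp (1 + (-x / 2 + x ^ 2 / 3)) =
        Real.exp 1 * Real.exp (-x / 2 + x ^ 2 / 3) := Real.exp_add _ _
    have h3 : Real.exp 1 * Real.exp (-x / 2 + x ^ 2 / 3) <
        Real.exp 1 * (1 + (-x / 2 + x ^ 2 / 3) + (-x / 2 + x ^ 2 / 3) ^ 2 / 2) :=
      mul_lt_mul_of_pos_left hq (Real.exp_pos 1)
    have h4 : 1 + (-x / 2 + x ^ 2 / 3) + (-x / 2 + x ^ 2 / 3) ^ 2 / 2 ≤
        1 - x / 2 + 11 * x ^ 2 / 24 := by nlinarith [sq_nonneg x, pow_pos hx0 3]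
    calc Real.exp (Real.log (1 + x) / x) < Real.exp 1 * Real.exp (-x / 2 + x ^ 2 / 3) := by
          rw [← h2]; exact h1
      _ < Real.exp 1 * (1 + (-x / 2 + x ^ 2 / 3) + (-x / 2 + x ^ 2 / 3) ^ 2 / 2) := h3
      _ ≤ Real.exp 1 * (1 - x / 2 + 11 * x ^ 2 / 24) := by
          apply mul_le_mul_of_nonneg_left h4 (Real.exp_pos 1).le
end

section
/- lim_{y→∞} [(y+1)^{y+1}/y^y - y^y/(y-1)^{y-1}] = e, where the limit is taken over real y → ∞. -/
open Real Filter

noncomputable def kellerG (x : ℝ) : ℝ :=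
  Real.exp (x * Real.log x - (x - 1) * Real.log (x - 1))

noncomputable def kellerH (x : ℝ) : ℝ :=
  kellerG x * (Real.log x - Real.log (x - 1))

lemma keller_hasDerivAt {x : ℝ} (hx : 1 < x) : HasDerivAt kellerG (kellerH x) x := by
  have hx0 : x ≠ 0 := by positivity
  have hx1 : x - 1 ≠ 0 := by intro h; nlinarith
  have h1 : HasDerivAt (fun x : ℝ => x * Real.log x) (Real.log x + 1) x :=
    Real.hasDerivAt_mul_log hx0
  have h2 : HasDerivAt (fun x : ℝ => (x - 1) * Real.log (x - 1)) (Real.log (x - 1) + 1) x := by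
    have := (Real.hasDerivAt_mul_log hx1).comp x ((hasDerivAt_id x).sub_const 1)
    simpa [Function.comp_def] using this
  have h3 := (h1.sub h2).exp
  have heq : kellerH x = Real.exp (x * Real.log x - (x - 1) * Real.log (x - 1)) *
      ((Real.log x + 1) - (Real.log (x - 1) + 1)) := by
    unfold kellerH kellerG; ring
  rw [heq]
  exact h3

lemma keller_mvt {y : ℝ} (hy : 2 ≤ y) :
    ∃ c, y < c ∧ c < y + 1 ∧ kellerH c = kellerG (y + 1) - kellerG y := by
  obtain ⟨c, hc, hceq⟩ := exists_hasDerivAt_eq_slope kellerG kellerH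
    (show y < y + 1 by linarith)
    (fun x hx => (keller_hasDerivAt (by rcases hx with ⟨h1, h2⟩; linarith)).continuousAt.continuousWithinAt)
    (fun x hx => keller_hasDerivAt (by rcases hx with ⟨h1, h2⟩; linarith))
  refine ⟨c, hc.1, hc.2, ?_⟩
  rw [hceq]; ring_nf

lemma keller_tendstoH : Tendsto kellerH atTop (nhds (Real.exp 1)) := by
  have hshift : Tendsto (fun x : ℝ => x - 1) atTop atTop :=
    tendsto_atTop_add_const_right _ (-1) tendsto_id
  have hA : Tendsto (fun x : ℝ => (1 + 1 / (x - 1)) ^ (x - 1)) atTop (nhds (Real.exp 1)) :=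
    (tendsto_one_add_div_rpow_exp 1).comp hshift
  have hinv : Tendsto (fun x : ℝ => 1 + 1 / (x - 1)) atTop (nhds 1) := by
    have h0 : Tendsto (fun x : ℝ => (x - 1)⁻¹) atTop (nhds 0) :=
      tendsto_inv_atTop_zero.comp hshift
    have := h0.const_add 1
    simpa [one_div] using this
  have hlogA : Tendsto (fun x : ℝ => Real.log ((1 + 1 / (x - 1)) ^ (x - 1))) atTop (nhds 1) := by
    have := (Real.continuousAt_log (Real.exp_ne_zero 1)).tendsto.comp hA
    simpa [Function.comp_def] using this
  have hmain : Tendsto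
      (fun x : ℝ => (1 + 1 / (x - 1)) ^ (x - 1) *
        ((1 + 1 / (x - 1)) * Real.log ((1 + 1 / (x - 1)) ^ (x - 1))))
      atTop (nhds (Real.exp 1)) := by
    have := hA.mul (hinv.mul hlogA)
    simpa using this
  apply hmain.congr'
  filter_upwards [eventually_ge_atTop (2 : ℝ)] with x hx
  have ht : (0 : ℝ) < x - 1 := by linarith
  have hx0 : (0 : ℝ) < x := by linarith
  have h1 : 1 + 1 / (x - 1) = x / (x - 1) := by field_simp; ring
  have hq : (0 : ℝ) < x / (x - 1) := by positivity
  rw [h1, Real.log_rpow hq, Real.rpow_def_of_pos hq, Real.log_div hx0.ne' ht.ne']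
  unfold kellerH kellerG
  rw [show x * Real.log x - (x - 1) * Real.log (x - 1)
      = Real.log x + (x - 1) * (Real.log x - Real.log (x - 1)) by ring,
    Real.exp_add, Real.exp_log hx0]
  field_simp

theorem keller_limit :
    Filter.Tendsto
      (fun y : ℝ => (y + 1) ^ (y + 1) / y ^ y - y ^ y / (y - 1) ^ (y - 1))
      Filter.atTop (nhds (Real.exp 1)) := by
  have key : ∀ y : ℝ, 2 ≤ y → ∃ c, y < c ∧ c < y + 1 ∧ kellerH c = kellerG (y + 1) - kellerG y :=
    fun y hy => keller_mvt hy
  choose! c hc1 hc2 hc3 using key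
  have hctop : Tendsto c atTop atTop := by
    apply tendsto_atTop_mono' atTop (f₁ := id)
    · filter_upwards [eventually_ge_atTop (2 : ℝ)] with y hy
      exact (hc1 y hy).le
    · exact tendsto_id
  have hcomp := keller_tendstoH.comp hctop
  apply hcomp.congr'
  filter_upwards [eventually_ge_atTop (2 : ℝ)] with y hy
  have h1 : (0 : ℝ) < y - 1 := by linarith
  have h2 : (0 : ℝ) < y := by linarith
  have h3 : (0 : ℝ) < y + 1 := by linarith
  simp only [Function.comp_apply]
  rw [hc3 y hy]
  unfold kellerG
  rw [show y + 1 - 1 = y by ring, Real.rpow_def_of_pos h3, Real.rpow_def_of_pos h2,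
    Real.rpow_def_of_pos h1, ← Real.exp_sub, ← Real.exp_sub]
  ring_nf
end

section
/- For every real c, lim_{n→∞} [(n+1)(1 + 1/(n+c))^{n+c} - n(1 + 1/(n+c-1))^{n+c-1}] = e. -/
open Real Filter

noncomputable def gK (y : ℝ) : ℝ := Real.exp (y * Real.log (1 + 1/y))

lemma gK_hasDerivAt (x : ℝ) (hx : 0 < x) :
    HasDerivAt gK (gK x * (Real.log (1 + 1/x) - 1/(x+1))) x := by
  have hx' : x ≠ 0 := hx.ne'
  have h0 : (0:ℝ) < 1 + 1/x := by positivity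
  have h1 : HasDerivAt (fun y : ℝ => 1 + 1/y) (-(1/x^2)) x := by
    simpa [one_div] using (hasDerivAt_inv hx').const_add 1
  have h2 : HasDerivAt (fun y : ℝ => Real.log (1 + 1/y)) (-(1/x^2) / (1 + 1/x)) x :=
    h1.log h0.ne'
  have h3 : HasDerivAt (fun y : ℝ => y * Real.log (1 + 1/y))
      (1 * Real.log (1 + 1/x) + x * (-(1/x^2) / (1 + 1/x))) x :=
    (hasDerivAt_id x).mul h2
  have h4 := h3.exp
  have h5 : x * (-(1/x^2) / (1 + 1/x)) = -(1/(x+1)) := by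
    have h : (1:ℝ) + 1/x = (x+1)/x := by field_simp
    rw [h, div_div_eq_mul_div]
    field_simp
  have heq : Real.exp (x * Real.log (1 + 1/x)) *
      (1 * Real.log (1 + 1/x) + x * (-(1/x^2) / (1 + 1/x)))
      = gK x * (Real.log (1 + 1/x) - 1/(x+1)) := by
    rw [h5]
    unfold gK
    ring
  rw [heq] at h4
  exact h4

lemma gK_le (x : ℝ) (hx : 0 < x) : gK x ≤ Real.exp 1 := by
  unfold gK
  apply Real.exp_le_exp.mpr
  have h1 : Real.log (1 + 1/x) ≤ 1/x := by
    have := Real.log_le_sub_one_of_pos (show (0:ℝ) < 1 + 1/x by positivity)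
    linarith
  calc x * Real.log (1 + 1/x) ≤ x * (1/x) := by
        exact mul_le_mul_of_nonneg_left h1 hx.le
    _ = 1 := by field_simp

lemma gK_factor_bounds (x : ℝ) (hx : 0 < x) :
    0 ≤ Real.log (1 + 1/x) - 1/(x+1) ∧ Real.log (1 + 1/x) - 1/(x+1) ≤ 1/x^2 := by
  have hx1 : (0:ℝ) < x + 1 := by linarith
  have h0 : (0:ℝ) < 1 + 1/x := by positivity
  have hlog_le : Real.log (1 + 1/x) ≤ 1/x := by
    have := Real.log_le_sub_one_of_pos h0; linarith
  have hlog_ge : 1/(x+1) ≤ Real.log (1 + 1/x) := by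
    have h2 := Real.log_le_sub_one_of_pos (show (0:ℝ) < (1 + 1/x)⁻¹ by positivity)
    have h3 : Real.log (1 + 1/x)⁻¹ = -Real.log (1 + 1/x) := Real.log_inv _
    have h4 : (1 + 1/x)⁻¹ - 1 = -(1/(x+1)) := by
      rw [inv_eq_one_div]
      field_simp
      ring
    rw [h3, h4] at h2
    linarith
  constructor
  · linarith
  · have e2 : 1/x - 1/(x+1) = 1/(x*(x+1)) := by
      field_simp
      ring
    have h5 : 1/(x*(x+1)) ≤ 1/x^2 := by
      apply one_div_le_one_div_of_le (by positivity)
      nlinarith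
    linarith

lemma gK_diff_bounds (x : ℝ) (hx : 1 ≤ x) :
    0 ≤ gK (x+1) - gK x ∧ gK (x+1) - gK x ≤ Real.exp 1 / x^2 := by
  have hx0 : (0:ℝ) < x := by linarith
  obtain ⟨ξ, hξ, hslope⟩ := exists_hasDerivAt_eq_slope gK
    (fun y => gK y * (Real.log (1 + 1/y) - 1/(y+1)))
    (show x < x + 1 by linarith)
    (fun y hy => (gK_hasDerivAt y (by have := hy.1; linarith)).continuousAt.continuousWithinAt)
    (fun y hy => gK_hasDerivAt y (by have := hy.1; linarith))
  have hξ0 : (0:ℝ) < ξ := lt_trans hx0 hξ.1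
  have hval : gK (x+1) - gK x = gK ξ * (Real.log (1 + 1/ξ) - 1/(ξ+1)) := by
    have : x + 1 - x = 1 := by ring
    rw [this, div_one] at hslope
    exact hslope.symm
  obtain ⟨hf0, hf1⟩ := gK_factor_bounds ξ hξ0
  have hg0 : (0:ℝ) < gK ξ := Real.exp_pos _
  constructor
  · rw [hval]; exact mul_nonneg hg0.le hf0
  · rw [hval]
    calc gK ξ * (Real.log (1 + 1/ξ) - 1/(ξ+1)) ≤ Real.exp 1 * (1/ξ^2) := by
          apply mul_le_mul (gK_le ξ hξ0) hf1 hf0 (Real.exp_pos 1).le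
      _ ≤ Real.exp 1 / x^2 := by
          rw [mul_one_div]
          apply div_le_div_of_nonneg_left (Real.exp_pos 1).le (by positivity)
          nlinarith [hξ.1]

theorem keller_limit_shifted (c : ℝ) :
    Filter.Tendsto
      (fun n : ℕ =>
        ((n : ℝ) + 1) * (1 + 1 / ((n : ℝ) + c)) ^ ((n : ℝ) + c) -
          (n : ℝ) * (1 + 1 / ((n : ℝ) + c - 1)) ^ ((n : ℝ) + c - 1))
      Filter.atTop (nhds (Real.exp 1)) := by
  obtain ⟨N, hN⟩ := exists_nat_ge (2 * |c| + 2)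
  have habs : -|c| ≤ c := neg_abs_le c
  -- basic facts for n ≥ N
  have hbig : ∀ n : ℕ, N ≤ n → 1 ≤ (n:ℝ) + c - 1 ∧ (n:ℝ)/2 ≤ (n:ℝ) + c - 1 ∧ (0:ℝ) < n := by
    intro n hn
    have h1 : (2*|c| + 2 : ℝ) ≤ n := le_trans hN (by exact_mod_cast hn)
    have habs' : (0:ℝ) ≤ |c| := abs_nonneg c
    refine ⟨by linarith, by linarith, by linarith⟩
  -- Part A : tendsto of the rpow term
  have hA : Tendsto (fun n : ℕ => (1 + 1/((n:ℝ)+c)) ^ ((n:ℝ)+c)) atTop (nhds (Real.exp 1)) := by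
    have h := tendsto_one_add_div_rpow_exp 1
    have hcomp : Tendsto (fun n : ℕ => (n:ℝ) + c) atTop atTop :=
      tendsto_atTop_add_const_right atTop c tendsto_natCast_atTop_atTop
    have := h.comp hcomp
    exact this
  -- Part B : the correction term tends to 0
  have hB : Tendsto (fun n : ℕ => (n:ℝ) * (gK ((n:ℝ)+c) - gK ((n:ℝ)+c-1))) atTop (nhds 0) := by
    refine squeeze_zero' ?_ ?_ (tendsto_const_div_atTop_nhds_zero_nat (4 * Real.exp 1))
    · filter_upwards [eventually_ge_atTop N] with n hn
      obtain ⟨h1, h2, h3⟩ := hbig n hn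
      have hd := (gK_diff_bounds ((n:ℝ)+c-1) h1).1
      have he : ((n:ℝ) + c - 1) + 1 = (n:ℝ) + c := by ring
      rw [he] at hd
      exact mul_nonneg h3.le hd
    · filter_upwards [eventually_ge_atTop N] with n hn
      obtain ⟨h1, h2, h3⟩ := hbig n hn
      have hd := (gK_diff_bounds ((n:ℝ)+c-1) h1).2
      have he : ((n:ℝ) + c - 1) + 1 = (n:ℝ) + c := by ring
      rw [he] at hd
      calc (n:ℝ) * (gK ((n:ℝ)+c) - gK ((n:ℝ)+c-1))
            ≤ (n:ℝ) * (Real.exp 1 / ((n:ℝ)+c-1)^2) :=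
            mul_le_mul_of_nonneg_left hd h3.le
        _ ≤ 4 * Real.exp 1 / (n:ℝ) := by
            set x := (n:ℝ) + c - 1 with hxdef
            have hx0 : (0:ℝ) < x := by linarith
            have hfrac : (n:ℝ) * (Real.exp 1 / x^2) = ((n:ℝ) * Real.exp 1) / x^2 := by ring
            rw [hfrac, div_le_div_iff₀ (by positivity) h3]
            have hq : (0:ℝ) ≤ (2*x - n) * (2*x + n) := by nlinarith
            nlinarith [mul_nonneg (Real.exp_pos 1).le hq]
  -- combine
  have hsum := hA.add hB
  rw [add_zero] at hsum
  apply hsum.congr'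
  filter_upwards [eventually_ge_atTop N] with n hn
  obtain ⟨h1, h2, h3⟩ := hbig n hn
  have hpos1 : (0:ℝ) < (n:ℝ) + c := by linarith
  have hpos2 : (0:ℝ) < (n:ℝ) + c - 1 := by linarith
  have hP : (1 + 1/((n:ℝ)+c)) ^ ((n:ℝ)+c) = gK ((n:ℝ)+c) := by
    unfold gK
    rw [Real.rpow_def_of_pos (by positivity)]
    ring_nf
  have hQ : (1 + 1/((n:ℝ)+c-1)) ^ ((n:ℝ)+c-1) = gK ((n:ℝ)+c-1) := by
    unfold gK
    rw [Real.rpow_def_of_pos (by positivity)]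
    ring_nf
  rw [hP, hQ]
  ring
end

section
/- Let g(x) = Σ_{k=0}^∞ a_k x^k have positive radius of convergence ϱ, G(y) = g(1/y), and let c ∈ ℝ. Then for y sufficiently large, (y+1)G(y+c) - yG(y+c-1) = a₀ + Σ_{k=2}^∞ [c·Σ_{i=1}^{k-1} C(k-1, i-1) a_i - (Σ_{i=1}^{k-1} C(k, i-1) a_i + (C(k, k-1) - 1) a_k)] / (y+c)^k. -/
open Finset

lemma pascal_sum (K : ℕ) (b : ℕ → ℝ) :
    ∑ k ∈ range (K+1), ((K+2).choose k : ℝ) * b k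
      = ∑ k ∈ range (K+1), ((K+1).choose k : ℝ) * b k
        + ∑ k ∈ range (K+1), ((K+1).choose k : ℝ) * b (k+1) - (K+1) * b (K+1) := by
  rw [Finset.sum_range_succ' (fun k => ((K+2).choose k : ℝ) * b k),
      Finset.sum_range_succ' (fun k => ((K+1).choose k : ℝ) * b k),
      Finset.sum_range_succ (fun k => ((K+1).choose k : ℝ) * b (k+1))]
  simp only [Nat.choose_zero_right, Nat.cast_one, one_mul, Nat.choose_succ_succ,
    Nat.cast_add, add_mul, Nat.choose_succ_self_right]
  rw [Finset.sum_add_distrib]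
  ring

lemma coeff_eq (a : ℕ → ℝ) (c : ℝ) (K : ℕ) :
    c * ∑ i ∈ Finset.Icc 1 (K + 1), ((K+1).choose (i - 1) : ℝ) * a i -
      (∑ i ∈ Finset.Icc 1 (K + 1), ((K + 2).choose (i - 1) : ℝ) * a i +
        (((K + 2).choose (K + 1) : ℝ) - 1) * a (K + 2))
    = ∑ k ∈ range (K + 1), ((K+1).choose k : ℝ) * ((c - 1) * a (k + 1) - a (k + 2)) := by
  have h1 : Finset.Icc 1 (K+1) = Finset.Ico 1 (K+2) := by rw [← Finset.Ico_add_one_right_eq_Icc]; rfl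
  have e1 : ∀ (n : ℕ), ∑ i ∈ Finset.Icc 1 (K + 1), ((n).choose (i - 1) : ℝ) * a i
      = ∑ k ∈ range (K + 1), ((n).choose k : ℝ) * a (k + 1) := by
    intro n
    rw [h1, Finset.sum_Ico_eq_sum_range]
    refine Finset.sum_congr (by norm_num) fun k _ => ?_
    rw [show 1 + k - 1 = k from by omega, show 1 + k = k + 1 from by omega]
  rw [e1, e1, Nat.choose_succ_self_right]
  have hsplit : ∑ k ∈ range (K + 1), ((K+1).choose k : ℝ) * ((c - 1) * a (k + 1) - a (k + 2))
      = (c-1) * ∑ k ∈ range (K+1), ((K+1).choose k : ℝ) * a (k+1)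
        - ∑ k ∈ range (K+1), ((K+1).choose k : ℝ) * a (k+2) := by
    rw [Finset.mul_sum, ← Finset.sum_sub_distrib]
    exact Finset.sum_congr rfl fun k _ => by ring
  rw [hsplit, pascal_sum K (fun k => a (k+1))]
  push_cast
  ring

lemma inner_hasSum {w : ℝ} (hw0 : 0 < w) (hw1 : w < 1) (e : ℝ) (k : ℕ) :
    HasSum (fun j : ℕ => e * ((j + k + 1).choose k : ℝ) * w ^ (k + 2 + j))
      (e * ((w / (1 - w)) ^ (k + 1) - w ^ (k + 1))) := by
  have hw : ‖w‖ < 1 := by rw [Real.norm_eq_abs, abs_of_pos hw0]; exact hw1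
  have h0 := hasSum_choose_mul_geometric_of_norm_lt_one (𝕜 := ℝ) k hw
  have h1 : HasSum (fun n : ℕ => (((n + 1 + k).choose k : ℕ) : ℝ) * w ^ (n + 1))
      (1 / (1 - w) ^ (k + 1) - 1) := by
    have := (hasSum_nat_add_iff' (f := fun n => (((n + k).choose k : ℕ) : ℝ) * w ^ n) 1).2 h0
    simpa using this
  have h2 := h1.mul_left (e * w ^ (k + 1))
  have hne : (1 - w) ≠ 0 := by intro h; linarith [sub_eq_zero.mp h]
  have hv : e * w ^ (k + 1) * (1 / (1 - w) ^ (k + 1) - 1)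
      = e * ((w / (1 - w)) ^ (k + 1) - w ^ (k + 1)) := by
    rw [div_pow]; field_simp
  have hfun : (fun j : ℕ => e * w ^ (k + 1) * (((j + 1 + k).choose k : ℝ) * w ^ (j + 1)))
      = fun j : ℕ => e * ((j + k + 1).choose k : ℝ) * w ^ (k + 2 + j) := by
    funext j
    rw [show j + 1 + k = j + k + 1 from by omega,
        show k + 2 + j = (k + 1) + (j + 1) from by omega, pow_add]
    ring
  rw [hv, hfun] at h2
  exact h2

theorem keller_expansion_shifted (a : ℕ → ℝ) (ϱ : ℝ) (hϱ : 0 < ϱ)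
    (hconv : ∀ x : ℝ, |x| < ϱ → Summable (fun k : ℕ => a k * x ^ k))
    (G : ℝ → ℝ) (hG : ∀ y : ℝ, G y = ∑' k : ℕ, a k * (1 / y) ^ k)
    (c : ℝ) :
    ∃ y₀ : ℝ, ∀ y : ℝ, y ≥ y₀ →
      HasSum
        (fun k : ℕ =>
          (c * ∑ i ∈ Finset.Icc 1 (k + 2 - 1), ((k + 2 - 1).choose (i - 1) : ℝ) * a i -
              (∑ i ∈ Finset.Icc 1 (k + 2 - 1), ((k + 2).choose (i - 1) : ℝ) * a i +
                (((k + 2).choose (k + 2 - 1) : ℝ) - 1) * a (k + 2))) / (y + c) ^ (k + 2))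
        ((y + 1) * G (y + c) - y * G (y + c - 1) - a 0) := by
  -- radius and coefficient bound
  obtain ⟨r, hr0, hr_half, hrϱ⟩ : ∃ r : ℝ, 0 < r ∧ r ≤ 1 / 2 ∧ r < ϱ := by
    refine ⟨min 1 ϱ / 2, by positivity, ?_, ?_⟩
    · have : min 1 ϱ ≤ 1 := min_le_left _ _; linarith
    · have h1 : min 1 ϱ ≤ ϱ := min_le_right _ _
      have h2 : 0 < min 1 ϱ := lt_min one_pos hϱ
      linarith
  have hr1 : r < 1 := lt_of_le_of_lt hr_half (by norm_num)
  -- coefficient bound M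
  obtain ⟨M, hM⟩ : ∃ M : ℝ, ∀ k : ℕ, |a k| * r ^ k ≤ M := by
    have hs : Summable (fun k : ℕ => a k * r ^ k) :=
      hconv r (by rw [abs_of_pos hr0]; exact hrϱ)
    have h0 : Filter.Tendsto (fun k : ℕ => |a k * r ^ k|) Filter.atTop (nhds 0) := by
      simpa using hs.tendsto_atTop_zero.abs
    obtain ⟨M, hMub⟩ := h0.bddAbove_range
    refine ⟨M, fun k => ?_⟩
    have := hMub (Set.mem_range_self k)
    rwa [abs_mul, abs_of_pos (pow_pos hr0 k)] at this
  have hM0 : 0 ≤ M := le_trans (by positivity) (hM 0)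
  refine ⟨|c| + 2 + 2 / r, fun y hy => ?_⟩
  -- basic positivity facts about z = y + c
  have hrc : (2:ℝ) / r ≥ 4 := by
    rw [ge_iff_le, le_div_iff₀ hr0]; linarith
  have hz2 : y + c ≥ 2 + 2 / r := by
    have := neg_abs_le c; linarith
  have hz6 : y + c ≥ 6 := by linarith
  have hz1 : y + c - 1 ≥ 1 + 2 / r := by linarith
  have hz1pos : (0:ℝ) < y + c - 1 := by linarith
  have hzpos : (0:ℝ) < y + c := by linarith
  set w : ℝ := 1 / (y + c) with hw_def
  set t : ℝ := 1 / (y + c - 1) with ht_def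
  clear_value w t
  have hw0 : 0 < w := by rw [hw_def]; positivity
  have ht0 : 0 < t := by rw [ht_def]; positivity
  have htr : t < r := by
    rw [ht_def, div_lt_iff₀ hz1pos]
    have h2 : r * (2 / r) = 2 := by field_simp
    nlinarith [mul_le_mul_of_nonneg_left hz1 (le_of_lt hr0), h2]
  have hwt : w < t := by
    rw [hw_def, ht_def]
    apply div_lt_div_of_pos_left one_pos hz1pos; linarith
  have hw1 : w < 1 := by linarith
  have ht1 : t < 1 := by linarith
  have hwϱ : |w| < ϱ := by rw [abs_of_pos hw0]; linarith
  have htϱ : |t| < ϱ := by rw [abs_of_pos ht0]; linarith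
  have hzw : (y + c) * w = 1 := by rw [hw_def]; field_simp
  have hzt : (y + c - 1) * t = 1 := by rw [ht_def]; field_simp
  have htw : t = w / (1 - w) := by
    rw [hw_def, ht_def]
    rw [eq_div_iff]
    · field_simp
    · intro h
      have : w = 1 := by linarith [sub_eq_zero.mp h]
      rw [hw_def] at this
      have : (y + c) * (1 / (y+c)) = (y+c) * 1 := by rw [this]
      rw [mul_one_div, div_self (ne_of_gt hzpos)] at this
      linarith
  -- sums of the power series at w and t
  have hSw : HasSum (fun k : ℕ => a k * w ^ k) (∑' k : ℕ, a k * w ^ k) :=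
    (hconv w hwϱ).hasSum
  have hSt : HasSum (fun k : ℕ => a k * t ^ k) (∑' k : ℕ, a k * t ^ k) :=
    (hconv t htϱ).hasSum
  set Sw : ℝ := ∑' k : ℕ, a k * w ^ k with hSw_def
  set St : ℝ := ∑' k : ℕ, a k * t ^ k with hSt_def
  have hGz : G (y + c) = Sw := by rw [hG (y + c), hSw_def, hw_def]
  have hGz1 : G (y + c - 1) = St := by rw [hG (y + c - 1), hSt_def, ht_def]
  -- shifted sums
  have hshift : ∀ (x zx : ℝ), zx * x = 1 → HasSum (fun k : ℕ => a k * x ^ k) (∑' k : ℕ, a k * x ^ k) →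
      HasSum (fun k : ℕ => a (k+1) * x ^ (k+1)) ((∑' k : ℕ, a k * x ^ k) - a 0) ∧
      HasSum (fun k : ℕ => a (k+2) * x ^ (k+1)) (zx * ((∑' k : ℕ, a k * x ^ k) - a 0 - a 1 * x)) := by
    intro x zx hzx hs
    constructor
    · have := (hasSum_nat_add_iff' (f := fun k : ℕ => a k * x ^ k) 1).2 hs
      simpa using this
    · have h2 := (hasSum_nat_add_iff' (f := fun k : ℕ => a k * x ^ k) 2).2 hs
      have h2' : HasSum (fun k : ℕ => a (k+2) * x ^ (k+2))
          ((∑' k : ℕ, a k * x ^ k) - a 0 - a 1 * x) := by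
        have hrange : ∑ i ∈ range 2, a i * x ^ i = a 0 + a 1 * x := by
          simp [Finset.sum_range_succ]
        rw [hrange] at h2
        convert h2 using 1; rfl; ring
      have h3 := h2'.mul_left zx
      have hfun : (fun k : ℕ => zx * (a (k+2) * x ^ (k+2)))
          = fun k : ℕ => a (k+2) * x ^ (k+1) := by
        funext k
        rw [pow_succ (n := k+1)]
        calc zx * (a (k+2) * (x ^ (k+1) * x)) = a (k+2) * x ^ (k+1) * (zx * x) := by ring
        _ = a (k+2) * x ^ (k+1) := by rw [hzx, mul_one]
      rwa [hfun] at h3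
  obtain ⟨hAw, hBw⟩ := hshift w (y + c) hzw hSw
  obtain ⟨hAt, hBt⟩ := hshift t (y + c - 1) hzt hSt
  -- the function E and the double-indexed family T
  set E : ℕ → ℝ := fun k => (c - 1) * a (k+1) - a (k+2) with hE_def
  set T : ℕ × ℕ → ℝ :=
    fun p => E p.1 * ((p.2 + p.1 + 1).choose p.1 : ℝ) * w ^ (p.1 + 2 + p.2) with hT_def
  have hTin : ∀ k : ℕ, HasSum (fun j => T (k, j)) (E k * (t ^ (k+1) - w ^ (k+1))) := by
    intro k
    have := inner_hasSum hw0 hw1 (E k) k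
    rwa [← htw] at this
  have hTabs : ∀ k : ℕ, HasSum (fun j => |T (k, j)|) (|E k| * (t ^ (k+1) - w ^ (k+1))) := by
    intro k
    have h := inner_hasSum hw0 hw1 (|E k|) k
    rw [← htw] at h
    have hfun : (fun j : ℕ => |E k| * ((j + k + 1).choose k : ℝ) * w ^ (k + 2 + j))
        = fun j : ℕ => |T (k, j)| := by
      funext j
      rw [hT_def]
      simp only []
      rw [abs_mul, abs_mul, abs_of_nonneg (by positivity : (0:ℝ) ≤ ((j + k + 1).choose k : ℝ)),
          abs_of_nonneg (by positivity : (0:ℝ) ≤ w ^ (k + 2 + j))]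
    rwa [hfun] at h
  -- the row sums g and their total
  have hg : HasSum (fun k => E k * (t ^ (k+1) - w ^ (k+1)))
      ((c-1) * (St - a 0) - (c-1) * (Sw - a 0)
        - ((y + c - 1) * (St - a 0 - a 1 * t) - (y + c) * (Sw - a 0 - a 1 * w))) := by
    have h := ((hAt.mul_left (c-1)).sub (hAw.mul_left (c-1))).sub (hBt.sub hBw)
    have hfun : (fun k : ℕ => ((c-1) * (a (k+1) * t ^ (k+1)) - (c-1) * (a (k+1) * w ^ (k+1)))
          - (a (k+2) * t ^ (k+1) - a (k+2) * w ^ (k+1)))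
        = fun k => E k * (t ^ (k+1) - w ^ (k+1)) := by
      funext k; rw [hE_def]; ring
    rwa [hfun] at h
  have hval : (c-1) * (St - a 0) - (c-1) * (Sw - a 0)
        - ((y + c - 1) * (St - a 0 - a 1 * t) - (y + c) * (Sw - a 0 - a 1 * w))
      = (y + 1) * G (y + c) - y * G (y + c - 1) - a 0 := by
    rw [hGz, hGz1]
    linear_combination (a 1) * hzt - (a 1) * hzw
  rw [hval] at hg
  -- summability of T
  have habs : Summable (fun p : ℕ × ℕ => |T p|) := by
    rw [summable_prod_of_nonneg (fun p => abs_nonneg _)]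
    refine ⟨fun k => (hTabs k).summable, ?_⟩
    have htsum : ∀ k : ℕ, ∑' j, |T (k, j)| = |E k| * (t ^ (k+1) - w ^ (k+1)) :=
      fun k => (hTabs k).tsum_eq
    simp only [htsum]
    set C₀ : ℝ := |c - 1| * M + M / r with hC₀_def
    set q : ℝ := t / r with hq_def
    clear_value C₀ q
    have hC₀0 : 0 ≤ C₀ := by rw [hC₀_def]; positivity
    have hq0 : 0 ≤ q := by rw [hq_def]; positivity
    have hq1 : q < 1 := by rw [hq_def, div_lt_one hr0]; exact htr
    have hgeo : Summable (fun k : ℕ => C₀ * q ^ (k+1)) := by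
      have := (summable_geometric_of_lt_one hq0 hq1).mul_left (C₀ * q)
      refine this.congr fun k => ?_
      rw [pow_succ']; ring
    refine Summable.of_nonneg_of_le (fun k => ?_) (fun k => ?_) hgeo
    · have : w ^ (k+1) ≤ t ^ (k+1) :=
        pow_le_pow_left₀ (le_of_lt hw0) (le_of_lt hwt) _
      have h2 : 0 ≤ t ^ (k+1) - w ^ (k+1) := by linarith
      positivity
    · have hak : ∀ n : ℕ, |a n| ≤ M / r ^ n := fun n => by
        rw [le_div_iff₀ (pow_pos hr0 n)]; exact hM n
      have hE_le : |E k| ≤ C₀ / r ^ (k+1) := by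
        rw [hE_def]
        calc |(c - 1) * a (k+1) - a (k+2)| ≤ |(c-1) * a (k+1)| + |a (k+2)| := abs_sub _ _
        _ = |c-1| * |a (k+1)| + |a (k+2)| := by rw [abs_mul]
        _ ≤ |c-1| * (M / r ^ (k+1)) + M / r ^ (k+2) := by
            gcongr
            · exact hak (k+1)
            · exact hak (k+2)
        _ = C₀ / r ^ (k+1) := by
            rw [hC₀_def, pow_succ (n := k+1)]
            field_simp
      have hsub : t ^ (k+1) - w ^ (k+1) ≤ t ^ (k+1) := by
        have : 0 ≤ w ^ (k+1) := by positivity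
        linarith
      calc |E k| * (t ^ (k+1) - w ^ (k+1)) ≤ |E k| * t ^ (k+1) := by
            apply mul_le_mul_of_nonneg_left hsub (abs_nonneg _)
      _ ≤ (C₀ / r ^ (k+1)) * t ^ (k+1) := by
            apply mul_le_mul_of_nonneg_right hE_le (by positivity)
      _ = C₀ * q ^ (k+1) := by
            rw [hq_def, div_pow]
            ring
  have hTsum : Summable T := habs.of_abs
  have hTS : HasSum T ((y + 1) * G (y + c) - y * G (y + c - 1) - a 0) := by
    have h1 := hTsum.hasSum
    have h2 : HasSum (fun k => E k * (t ^ (k+1) - w ^ (k+1))) (∑' p, T p) :=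
      h1.prod_fiberwise hTin
    rwa [h2.unique hg] at h1
  -- regrouping along antidiagonals
  set ι : ℕ × ℕ → ℕ × ℕ := fun p => (p.1 + p.2, p.1) with hι_def
  have hinj : Function.Injective ι := by
    intro p q h
    rw [hι_def] at h
    simp only [Prod.mk.injEq] at h
    obtain ⟨h1, h2⟩ := h
    exact Prod.ext h2 (by omega)
  set T' : ℕ × ℕ → ℝ := fun p => if p.2 ≤ p.1 then T (p.2, p.1 - p.2) else 0 with hT'_def
  have hcomp : T' ∘ ι = T := by
    funext p
    simp only [Function.comp_apply, hι_def, hT'_def, Nat.le_add_right, if_true,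
      Nat.add_sub_cancel_left]
  have hzero : ∀ p : ℕ × ℕ, p ∉ Set.range ι → T' p = 0 := by
    intro p hp
    rw [hT'_def]
    simp only []
    by_cases h : p.2 ≤ p.1
    · exfalso
      apply hp
      refine ⟨(p.2, p.1 - p.2), ?_⟩
      rw [hι_def]
      exact Prod.ext (by show p.2 + (p.1 - p.2) = p.1; omega) rfl
    · rw [if_neg h]
  have hT' : HasSum T' ((y + 1) * G (y + c) - y * G (y + c - 1) - a 0) := by
    rw [← hinj.hasSum_iff hzero, hcomp]
    exact hTS
  have hfib : ∀ K : ℕ, HasSum (fun k => T' (K, k)) (∑ k ∈ range (K+1), T' (K, k)) := by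
    intro K
    apply hasSum_sum_of_ne_finset_zero
    intro k hk
    rw [Finset.mem_range, not_lt] at hk
    rw [hT'_def]
    simp only []
    rw [if_neg (by omega)]
  have hfinal : HasSum (fun K => ∑ k ∈ range (K+1), T' (K, k))
      ((y + 1) * G (y + c) - y * G (y + c - 1) - a 0) :=
    hT'.prod_fiberwise hfib
  -- identify the grouped sums with the stated terms
  have hterm : ∀ K : ℕ,
      (c * ∑ i ∈ Finset.Icc 1 (K + 2 - 1), ((K + 2 - 1).choose (i - 1) : ℝ) * a i -
          (∑ i ∈ Finset.Icc 1 (K + 2 - 1), ((K + 2).choose (i - 1) : ℝ) * a i +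
            (((K + 2).choose (K + 2 - 1) : ℝ) - 1) * a (K + 2))) / (y + c) ^ (K + 2)
      = ∑ k ∈ range (K+1), T' (K, k) := by
    intro K
    have hKsimp : K + 2 - 1 = K + 1 := rfl
    rw [hKsimp, coeff_eq a c K]
    have hsum : ∑ k ∈ range (K+1), T' (K, k)
        = ∑ k ∈ range (K+1), ((K+1).choose k : ℝ) * E k * w ^ (K + 2) := by
      refine Finset.sum_congr rfl fun k hk => ?_
      rw [Finset.mem_range] at hk
      have hkK : k ≤ K := by omega
      rw [hT'_def]
      simp only []
      rw [if_pos hkK, hT_def]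
      simp only []
      rw [show K - k + k + 1 = K + 1 from by omega, show k + 2 + (K - k) = K + 2 from by omega]
      ring
    rw [hsum, ← Finset.sum_mul]
    have hwpow : w ^ (K+2) = ((y + c) ^ (K+2))⁻¹ := by
      rw [hw_def, one_div, inv_pow]
    rw [hwpow, div_eq_mul_inv]
  have hfuneq : (fun K : ℕ =>
      (c * ∑ i ∈ Finset.Icc 1 (K + 2 - 1), ((K + 2 - 1).choose (i - 1) : ℝ) * a i -
          (∑ i ∈ Finset.Icc 1 (K + 2 - 1), ((K + 2).choose (i - 1) : ℝ) * a i +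
            (((K + 2).choose (K + 2 - 1) : ℝ) - 1) * a (K + 2))) / (y + c) ^ (K + 2))
      = fun K => ∑ k ∈ range (K+1), T' (K, k) := funext hterm
  rw [hfuneq]
  exact hfinal
end

section
/- Let g(x) = Σ_{k=0}^∞ a_k x^k have positive radius of convergence, G(y) = g(1/y), and c ∈ ℝ. Then lim_{y→∞} [(y+1)G(y+c) - yG(y+c-1)] = a₀. -/
open Filter Topology

/-!
Write `g(x) = ∑ aₖ xᵏ = a₀ + x h(x)` with `h(x) = ∑ aₖ₊₁ xᵏ`, again a power series with positive
radius, hence continuous at `0`. Then `(y + p) (g(1/(y + b)) - a₀) = (y + p)/(y + b) · h(1/(y + b))`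
tends to `h(0) = a₁` for all `p, b`. The expression of the theorem is `a₀` plus the difference of
two such terms (`p = 1, b = c` and `p = 0, b = c - 1`), so it tends to `a₀ + a₁ - a₁`.
-/

section PowerSeries

variable {𝕜 : Type*} [NontriviallyNormedField 𝕜] {a : ℕ → 𝕜} {x : 𝕜}

theorem le_radius_ofScalars_of_summable (hx : Summable fun k => a k * x ^ k) :
    (‖x‖₊ : ENNReal) ≤ (FormalMultilinearSeries.ofScalars 𝕜 a).radius := by
  refine FormalMultilinearSeries.le_radius_of_tendsto _ (l := 0) ?_
  simpa [FormalMultilinearSeries.ofScalars_norm, norm_mul, norm_pow] using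
    hx.tendsto_atTop_zero.norm

theorem continuousAt_zero_tsum_mul_pow [CompleteSpace 𝕜] (hx : Summable fun k => a k * x ^ k)
    (hx0 : x ≠ 0) :
    ContinuousAt (fun z => ∑' k, a k * z ^ k) 0 := by
  have hpos : (0 : ENNReal) < (FormalMultilinearSeries.ofScalars 𝕜 a).radius :=
    lt_of_lt_of_le (by simpa using hx0) (le_radius_ofScalars_of_summable hx)
  have : ContinuousAt (FormalMultilinearSeries.ofScalarsSum (E := 𝕜) a) 0 :=
    (FormalMultilinearSeries.ofScalars 𝕜 a).continuousOn.continuousAt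
      (Metric.eball_mem_nhds 0 hpos)
  simpa only [FormalMultilinearSeries.ofScalarsSum_eq_tsum, smul_eq_mul] using this

theorem Summable.coeff_succ_mul_pow (hx : Summable fun k => a k * x ^ k) (hx0 : x ≠ 0) :
    Summable fun k => a (k + 1) * x ^ k := by
  refine ((summable_nat_add_iff 1).mpr hx).mul_left x⁻¹ |>.congr fun k => ?_
  field_simp
  ring

theorem Summable.tsum_mul_pow_eq_coeff_zero_add (hx : Summable fun k => a k * x ^ k) :
    ∑' k, a k * x ^ k = a 0 + x * ∑' k, a (k + 1) * x ^ k := by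
  rw [hx.tsum_eq_zero_add, ← tsum_mul_left]
  simp only [pow_zero, mul_one, pow_succ]
  congr 1
  exact tsum_congr fun k => by ring

end PowerSeries

theorem tendsto_one_div_add_atTop_nhds_zero (b : ℝ) :
    Tendsto (fun y : ℝ => 1 / (y + b)) atTop (𝓝 0) := by
  simpa only [one_div, Function.comp_def, id] using
    tendsto_inv_atTop_zero.comp (tendsto_atTop_add_const_right atTop b tendsto_id)

theorem tendsto_add_div_add_atTop_nhds_one (p b : ℝ) :
    Tendsto (fun y : ℝ => (y + p) / (y + b)) atTop (𝓝 1) := by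
  have h := ((tendsto_one_div_add_atTop_nhds_zero b).const_mul (p - b)).const_add 1
  rw [mul_zero, add_zero] at h
  refine h.congr' ?_
  filter_upwards [eventually_gt_atTop (-b)] with y hy
  have : y + b ≠ 0 := by linarith
  field_simp
  ring

theorem tendsto_add_mul_tsum_one_div_add_sub_coeff_zero {a : ℕ → ℝ} {ϱ : ℝ} (hϱ : 0 < ϱ)
    (hconv : ∀ x : ℝ, |x| < ϱ → Summable (fun k : ℕ => a k * x ^ k)) (p b : ℝ) :
    Tendsto (fun y : ℝ => (y + p) * (∑' k, a k * (1 / (y + b)) ^ k - a 0)) atTop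
      (𝓝 (a 1)) := by
  have hhalf : Summable fun k => a k * (ϱ / 2) ^ k :=
    hconv _ (by rw [abs_of_pos (by linarith)]; linarith)
  have hcont := continuousAt_zero_tsum_mul_pow (hhalf.coeff_succ_mul_pow (by positivity))
    (by positivity)
  have hu := tendsto_one_div_add_atTop_nhds_zero b
  have hlim := (tendsto_add_div_add_atTop_nhds_one p b).mul (hcont.tendsto.comp hu)
  rw [one_mul, tsum_eq_single 0 (fun k hk => by simp [hk])] at hlim
  simp only [zero_add, pow_zero, mul_one] at hlim
  refine hlim.congr' ?_
  filter_upwards [hu.eventually (Metric.ball_mem_nhds 0 hϱ), eventually_gt_atTop (-b)]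
    with y hy hyb
  have hsum := hconv (1 / (y + b)) (by simpa [Real.dist_eq] using hy)
  have : y + b ≠ 0 := by linarith
  rw [hsum.tsum_mul_pow_eq_coeff_zero_add]
  simp only [Function.comp_apply]
  field_simp
  ring

theorem keller_general_limit_shifted (a : ℕ → ℝ) (ϱ : ℝ) (hϱ : 0 < ϱ)
    (hconv : ∀ x : ℝ, |x| < ϱ → Summable (fun k : ℕ => a k * x ^ k))
    (G : ℝ → ℝ) (hG : ∀ y : ℝ, G y = ∑' k : ℕ, a k * (1 / y) ^ k)
    (c : ℝ) :
    Filter.Tendsto (fun y : ℝ => (y + 1) * G (y + c) - y * G (y + c - 1)) Filter.atTop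
      (nhds (a 0)) := by
  have hlim := ((tendsto_add_mul_tsum_one_div_add_sub_coeff_zero hϱ hconv 1 c).sub
    (tendsto_add_mul_tsum_one_div_add_sub_coeff_zero hϱ hconv 0 (c - 1))).const_add (a 0)
  rw [sub_self, add_zero] at hlim
  refine hlim.congr fun y => ?_
  rw [hG, hG, add_sub_assoc]
  ring
end
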